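/- arXiv:2409.09017 — 9 statements merged into one kernel-verified Lean document; each statement's English description precedes it below -/
import Mathlib

section
/- Let (h, [·,·]_h) be a Lie algebra over a field F, let a and i be vector spaces, let ρ : h → gl(i) be a representation, and let φ : h → Hom(a, i) be a linear map satisfying the 1-cocycle condition φ([x,y]_h) = ρ(x)∘φ(y) − ρ(y)∘φ(x) for all x, y in h. Let λ : h × h → a and μ : h × h → i be skew-symmetric bilinear maps. Define a skew-symmetric bilinear map [·,·] on h ⊕ a ⊕ i by [x,y] = [x,y]_h + λ(x,y) + μ(x,y) and [x, u + α] = φ(x)(u) + ρ(x)(α) for x, y in h, u in a, α in i, with all brackets among elements of a ⊕ i equal to zero. Then [·,·] is a Lie bracket on h ⊕ a ⊕ i if and only if the following two identities hold for all x, y, z in h: (1) λ([x,y]_h, z) + λ([y,z]_h, x) + λ([z,x]_h, y) = 0; and (2) φ(x)(λ(y,z)) − φ(y)(λ(x,z)) + φ(z)(λ(x,y)) + ρ(x)(μ(y,z)) − ρ(y)(μ(x,z)) + ρ(z)(μ(x,y)) − μ([x,y]_h, z) + μ([x,z]_h, y) − μ([y,z]_h, x) = 0. -/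
/-!
Write `J` for the Jacobiator of the bracket. Its `h`-component vanishes by the Jacobi identity
of `h`. Its `a`-component is `-(d_a λ)`. In its `i`-component the terms involving the `a`- and
`i`-coordinates cancel by the cocycle identity for `φ` and the representation identity for `ρ`,
leaving `e_φ(λ) + d_ρ(μ)`. So `J` depends only on the `h`-coordinates, and it vanishes exactly
when both conditions hold.
-/

section ExtensionBracket

variable {R h a i : Type*} [CommRing R] [LieRing h] [LieAlgebra R h]
  [AddCommGroup a] [Module R a] [AddCommGroup i] [Module R i]
  (ρ : h →ₗ[R] i →ₗ[R] i) (φ : h →ₗ[R] a →ₗ[R] i)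
  (la : h →ₗ[R] h →ₗ[R] a) (mu : h →ₗ[R] h →ₗ[R] i)

def jacobiator {M : Type*} [Add M] (br : M → M → M) (p q r : M) : M :=
  br p (br q r) + br q (br r p) + br r (br p q)

def extensionBracket (p q : h × a × i) : h × a × i :=
  (⁅p.1, q.1⁆, la p.1 q.1,
    mu p.1 q.1 + φ p.1 q.2.1 - φ q.1 p.2.1 + ρ p.1 q.2.2 - ρ q.1 p.2.2)

theorem jacobiator_extensionBracket_fst (p q r : h × a × i) :
    (jacobiator (extensionBracket ρ φ la mu) p q r).1 = 0 :=
  lie_jacobi p.1 q.1 r.1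

theorem jacobiator_extensionBracket_snd_fst (hla : ∀ x y : h, la x y = - la y x)
    (p q r : h × a × i) :
    (jacobiator (extensionBracket ρ φ la mu) p q r).2.1 =
      -(la ⁅p.1, q.1⁆ r.1 + la ⁅q.1, r.1⁆ p.1 + la ⁅r.1, p.1⁆ q.1) := by
  change la p.1 ⁅q.1, r.1⁆ + la q.1 ⁅r.1, p.1⁆ + la r.1 ⁅p.1, q.1⁆ = _
  rw [hla p.1, hla q.1, hla r.1]
  abel

theorem jacobiator_extensionBracket_snd_snd
    (hρ : ∀ x y : h, ρ ⁅x, y⁆ = ρ x ∘ₗ ρ y - ρ y ∘ₗ ρ x)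
    (hφ : ∀ x y : h, φ ⁅x, y⁆ = ρ x ∘ₗ φ y - ρ y ∘ₗ φ x)
    (hla : ∀ x y : h, la x y = - la y x) (hmu : ∀ x y : h, mu x y = - mu y x)
    (p q r : h × a × i) :
    (jacobiator (extensionBracket ρ φ la mu) p q r).2.2 =
      φ p.1 (la q.1 r.1) - φ q.1 (la p.1 r.1) + φ r.1 (la p.1 q.1)
        + ρ p.1 (mu q.1 r.1) - ρ q.1 (mu p.1 r.1) + ρ r.1 (mu p.1 q.1)
        - mu ⁅p.1, q.1⁆ r.1 + mu ⁅p.1, r.1⁆ q.1 - mu ⁅q.1, r.1⁆ p.1 := by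
  obtain ⟨x, u, α⟩ := p
  obtain ⟨y, v, β⟩ := q
  obtain ⟨z, w, γ⟩ := r
  have hφ₁ := LinearMap.congr_fun (hφ y z) u
  have hφ₂ := LinearMap.congr_fun (hφ x z) v
  have hφ₃ := LinearMap.congr_fun (hφ x y) w
  have hρ₁ := LinearMap.congr_fun (hρ y z) α
  have hρ₂ := LinearMap.congr_fun (hρ x z) β
  have hρ₃ := LinearMap.congr_fun (hρ x y) γ
  simp only [LinearMap.sub_apply, LinearMap.comp_apply] at hφ₁ hφ₂ hφ₃ hρ₁ hρ₂ hρ₃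
  simp only [jacobiator, extensionBracket, Prod.snd_add, map_add, map_sub]
  rw [hmu x ⁅y, z⁆, hmu y ⁅z, x⁆, hmu z ⁅x, y⁆, hla z x, hmu z x, ← lie_skew z x]
  simp only [map_neg, LinearMap.neg_apply]
  linear_combination (norm := module) -hφ₁ + hφ₂ - hφ₃ - hρ₁ + hρ₂ - hρ₃

theorem jacobiator_extensionBracket_eq_zero_iff
    (hρ : ∀ x y : h, ρ ⁅x, y⁆ = ρ x ∘ₗ ρ y - ρ y ∘ₗ ρ x)
    (hφ : ∀ x y : h, φ ⁅x, y⁆ = ρ x ∘ₗ φ y - ρ y ∘ₗ φ x)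
    (hla : ∀ x y : h, la x y = - la y x) (hmu : ∀ x y : h, mu x y = - mu y x)
    (p q r : h × a × i) :
    jacobiator (extensionBracket ρ φ la mu) p q r = 0 ↔
      la ⁅p.1, q.1⁆ r.1 + la ⁅q.1, r.1⁆ p.1 + la ⁅r.1, p.1⁆ q.1 = 0 ∧
      φ p.1 (la q.1 r.1) - φ q.1 (la p.1 r.1) + φ r.1 (la p.1 q.1)
        + ρ p.1 (mu q.1 r.1) - ρ q.1 (mu p.1 r.1) + ρ r.1 (mu p.1 q.1)
        - mu ⁅p.1, q.1⁆ r.1 + mu ⁅p.1, r.1⁆ q.1 - mu ⁅q.1, r.1⁆ p.1 = 0 := by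
  rw [Prod.ext_iff, Prod.ext_iff, jacobiator_extensionBracket_fst,
    jacobiator_extensionBracket_snd_fst ρ φ la mu hla,
    jacobiator_extensionBracket_snd_snd ρ φ la mu hρ hφ hla hmu]
  simp only [Prod.fst_zero, Prod.snd_zero, neg_eq_zero, true_and]

end ExtensionBracket

theorem stmt2_general (F : Type*) [Field F]
    (h : Type*) [LieRing h] [LieAlgebra F h]
    (a : Type*) [AddCommGroup a] [Module F a]
    (i : Type*) [AddCommGroup i] [Module F i]
    (ρ : h →ₗ[F] i →ₗ[F] i)
    (hρ : ∀ x y : h, ρ ⁅x, y⁆ = ρ x ∘ₗ ρ y - ρ y ∘ₗ ρ x)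
    (φ : h →ₗ[F] a →ₗ[F] i)
    (hφ : ∀ x y : h, φ ⁅x, y⁆ = ρ x ∘ₗ φ y - ρ y ∘ₗ φ x)
    (la : h →ₗ[F] h →ₗ[F] a) (hla : ∀ x y : h, la x y = - la y x)
    (mu : h →ₗ[F] h →ₗ[F] i) (hmu : ∀ x y : h, mu x y = - mu y x) :
    -- the bracket `[x+u+α, y+v+β] = [x,y]_h + λ(x,y) + μ(x,y) + φ(x)(v) − φ(y)(u)
    --                                + ρ(x)(β) − ρ(y)(α)` on `h ⊕ a ⊕ i`
    let br : h × a × i → h × a × i → h × a × i :=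
      fun p q => (⁅p.1, q.1⁆, la p.1 q.1,
        mu p.1 q.1 + φ p.1 q.2.1 - φ q.1 p.2.1 + ρ p.1 q.2.2 - ρ q.1 p.2.2)
    -- Jacobi identity (i.e. being a Lie bracket) is equivalent to the two conditions
    ((∀ p q r : h × a × i, br p (br q r) + br q (br r p) + br r (br p q) = 0) ↔
      ((∀ x y z : h, la ⁅x, y⁆ z + la ⁅y, z⁆ x + la ⁅z, x⁆ y = 0) ∧
       (∀ x y z : h,
          φ x (la y z) - φ y (la x z) + φ z (la x y)
            + ρ x (mu y z) - ρ y (mu x z) + ρ z (mu x y)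
            - mu ⁅x, y⁆ z + mu ⁅x, z⁆ y - mu ⁅y, z⁆ x = 0))) := by
  change (∀ p q r, jacobiator (extensionBracket ρ φ la mu) p q r = 0) ↔ _
  simp only [jacobiator_extensionBracket_eq_zero_iff ρ φ la mu hρ hφ hla hmu]
  exact ⟨fun H => ⟨fun x y z => (H (x, 0, 0) (y, 0, 0) (z, 0, 0)).1,
    fun x y z => (H (x, 0, 0) (y, 0, 0) (z, 0, 0)).2⟩, fun H p q r => ⟨H.1 _ _ _, H.2 _ _ _⟩⟩

/-- the bracket on `h ⊕ a ⊕ i` built from a Lie algebra `h`, a trivial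
module `a`, a representation `ρ` on `i`, a 1-cocycle `φ` and skew bilinear maps
`λ, μ` is a Lie bracket if and only if `d_a(λ) = 0` and `e_φ(λ) + d_ρ(μ) = 0`. -/
theorem stmt2 (F : Type*) [Field F] [CharZero F]
    (h : Type*) [LieRing h] [LieAlgebra F h] [FiniteDimensional F h]
    (a : Type*) [AddCommGroup a] [Module F a] [FiniteDimensional F a]
    (i : Type*) [AddCommGroup i] [Module F i] [FiniteDimensional F i]
    (ρ : h →ₗ[F] i →ₗ[F] i)
    (hρ : ∀ x y : h, ρ ⁅x, y⁆ = ρ x ∘ₗ ρ y - ρ y ∘ₗ ρ x)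
    (φ : h →ₗ[F] a →ₗ[F] i)
    (hφ : ∀ x y : h, φ ⁅x, y⁆ = ρ x ∘ₗ φ y - ρ y ∘ₗ φ x)
    (la : h →ₗ[F] h →ₗ[F] a) (hla : ∀ x y : h, la x y = - la y x)
    (mu : h →ₗ[F] h →ₗ[F] i) (hmu : ∀ x y : h, mu x y = - mu y x) :
    -- the bracket `[x+u+α, y+v+β] = [x,y]_h + λ(x,y) + μ(x,y) + φ(x)(v) − φ(y)(u)
    --                                + ρ(x)(β) − ρ(y)(α)` on `h ⊕ a ⊕ i`
    let br : h × a × i → h × a × i → h × a × i :=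
      fun p q => (⁅p.1, q.1⁆, la p.1 q.1,
        mu p.1 q.1 + φ p.1 q.2.1 - φ q.1 p.2.1 + ρ p.1 q.2.2 - ρ q.1 p.2.2)
    -- Jacobi identity (i.e. being a Lie bracket) is equivalent to the two conditions
    ((∀ p q r : h × a × i, br p (br q r) + br q (br r p) + br r (br p q) = 0) ↔
      ((∀ x y z : h, la ⁅x, y⁆ z + la ⁅y, z⁆ x + la ⁅z, x⁆ y = 0) ∧
       (∀ x y z : h,
          φ x (la y z) - φ y (la x z) + φ z (la x y)
            + ρ x (mu y z) - ρ y (mu x z) + ρ z (mu x y)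
            - mu ⁅x, y⁆ z + mu ⁅x, z⁆ y - mu ⁅y, z⁆ x = 0))) :=
  stmt2_general F h a i ρ hρ φ hφ la hla mu hmu
end

section
/- Let g be a finite-dimensional nilpotent Lie algebra over a field F, with J(g) = ∩_{k≥1} (Z_k(g) + g^k) where Z_k(g) is the upper central series and g^k the lower central series. Then there exists an integer m ≥ 1 such that J(g) = Z(g) + Σ_{k=1}^{m−1} (Z_{k+1}(g) ∩ g^k), where Z(g) denotes the center of g. -/
/-!
Write `Z k` for the upper and `G k` for the lower central series, `J = ⨅ k, Z (k+1) ⊔ G (k+1)` and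
`S j = Z 1 ⊔ ⨆ k ∈ [1, j], Z (k+1) ⊓ G k`. Only the lattice structure matters: `Z` is monotone,
`G` antitone and the lattice of ideals is modular. Each term of `S j` lies in every
`Z (k+1) ⊔ G (k+1)`, so `S j ≤ J`. Conversely, by modularity
`(S j ⊔ G (j+1)) ⊓ (Z (j+2) ⊔ G (j+2)) = S (j+1) ⊔ G (j+2)`, so by induction `J ≤ S j ⊔ G (j+1)`,
and for `j` beyond the nilpotency class the last term vanishes.
-/

open Finset

theorem sup_inf_sup_eq_of_le_of_le {α : Type*} [Lattice α] [IsModularLattice α] {a b c d : α}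
    (hac : a ≤ c) (hdb : d ≤ b) : (a ⊔ b) ⊓ (c ⊔ d) = a ⊔ c ⊓ b ⊔ d := by
  rw [sup_inf_assoc_of_le _ (le_sup_of_le_left hac), inf_comm, sup_comm c,
    sup_inf_assoc_of_le _ hdb, sup_comm d, sup_assoc]

section CentralSeries

variable {α : Type*} [CompleteLattice α] {Z G : ℕ → α}

theorem sup_iSup_Icc_inf_le (hZ : Monotone Z) (j : ℕ) :
    Z 1 ⊔ ⨆ k ∈ Icc 1 j, Z (k + 1) ⊓ G k ≤ Z (j + 1) := by
  refine sup_le (hZ (by omega)) (iSup₂_le fun k hk => inf_le_left.trans (hZ ?_))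
  have := (mem_Icc.mp hk).2
  omega

theorem sup_iSup_Icc_inf_le_iInf_sup (hZ : Monotone Z) (hG : Antitone G) (j : ℕ) :
    Z 1 ⊔ ⨆ k ∈ Icc 1 j, Z (k + 1) ⊓ G k ≤ ⨅ i, Z (i + 1) ⊔ G (i + 1) := by
  refine le_iInf fun i => sup_le (le_sup_of_le_left (hZ (by omega))) (iSup₂_le fun k _ => ?_)
  rcases le_or_gt k i with hki | hik
  · exact le_sup_of_le_left (inf_le_left.trans (hZ (by omega)))
  · exact le_sup_of_le_right (inf_le_right.trans (hG (by omega)))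

theorem iInf_sup_le_sup_iSup_Icc_inf_sup [IsModularLattice α] (hZ : Monotone Z) (hG : Antitone G)
    (j : ℕ) :
    ⨅ i, Z (i + 1) ⊔ G (i + 1) ≤ (Z 1 ⊔ ⨆ k ∈ Icc 1 j, Z (k + 1) ⊓ G k) ⊔ G (j + 1) := by
  induction j with
  | zero => exact (iInf_le _ 0).trans (sup_le_sup_right le_sup_left _)
  | succ j ih =>
    have hsucc : Z 1 ⊔ ⨆ k ∈ Icc 1 (j + 1), Z (k + 1) ⊓ G k =
        (Z 1 ⊔ ⨆ k ∈ Icc 1 j, Z (k + 1) ⊓ G k) ⊔ Z (j + 2) ⊓ G (j + 1) := by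
      rw [← insert_Icc_right_eq_Icc_add_one (by omega), Finset.iSup_insert, sup_left_comm, sup_comm]
    calc ⨅ i, Z (i + 1) ⊔ G (i + 1)
        ≤ ((Z 1 ⊔ ⨆ k ∈ Icc 1 j, Z (k + 1) ⊓ G k) ⊔ G (j + 1)) ⊓ (Z (j + 2) ⊔ G (j + 2)) :=
          le_inf ih (iInf_le _ (j + 1))
      _ = (Z 1 ⊔ ⨆ k ∈ Icc 1 (j + 1), Z (k + 1) ⊓ G k) ⊔ G (j + 2) := by
        rw [hsucc, sup_inf_sup_eq_of_le_of_le ((sup_iSup_Icc_inf_le hZ j).trans (hZ (by omega)))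
          (hG (by omega))]

theorem iInf_sup_eq_sup_iSup_Icc_inf [IsModularLattice α] (hZ : Monotone Z) (hG : Antitone G)
    {n : ℕ} (hn : G n = ⊥) :
    ⨅ i, Z (i + 1) ⊔ G (i + 1) = Z 1 ⊔ ⨆ k ∈ Icc 1 n, Z (k + 1) ⊓ G k := by
  refine le_antisymm ?_ (sup_iSup_Icc_inf_le_iInf_sup hZ hG n)
  simpa [le_bot_iff.mp (hn ▸ hG n.le_succ)] using iInf_sup_le_sup_iSup_Icc_inf_sup hZ hG n

end CentralSeries

theorem LieSubmodule.monotone_ucs {R L M : Type*} [CommRing R] [LieRing L] [LieAlgebra R L]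
    [AddCommGroup M] [Module R M] [LieRingModule L M] [LieModule R L M] (N : LieSubmodule R L M) :
    Monotone fun k => N.ucs k :=
  monotone_nat_of_le_succ fun k => (ucs_succ N k).symm ▸ le_normalizer _

theorem stmt5_general (F : Type*) [Field F]
    (g : Type*) [LieRing g] [LieAlgebra F g]
    [LieRing.IsNilpotent g] :
    ∃ m : ℕ, 1 ≤ m ∧
      (⨅ k : ℕ, ((⊥ : LieIdeal F g).ucs (k + 1) ⊔
          LieModule.lowerCentralSeries F g g (k + 1))) =
        (⊥ : LieIdeal F g).ucs 1 ⊔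
          ⨆ k ∈ Finset.Icc 1 (m - 1),
            ((⊥ : LieIdeal F g).ucs (k + 1) ⊓ LieModule.lowerCentralSeries F g g k) := by
  obtain ⟨n, hn⟩ := (LieModule.isNilpotent_iff F g g).mp inferInstance
  refine ⟨n + 1, le_add_self, ?_⟩
  rw [Nat.add_sub_cancel]
  exact iInf_sup_eq_sup_iSup_Icc_inf (LieSubmodule.monotone_ucs ⊥)
    (LieModule.antitone_lowerCentralSeries F g g) hn

/-- for a finite-dimensional nilpotent Lie algebra `g` there is `m ≥ 1`
with `J(g) = Z(g) + Σ_{k=1}^{m−1} (Z_{k+1}(g) ⊓ g^k)`. -/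
theorem stmt5 (F : Type*) [Field F] [CharZero F]
    (g : Type*) [LieRing g] [LieAlgebra F g] [FiniteDimensional F g]
    [LieRing.IsNilpotent g] :
    ∃ m : ℕ, 1 ≤ m ∧
      (⨅ k : ℕ, ((⊥ : LieIdeal F g).ucs (k + 1) ⊔
          LieModule.lowerCentralSeries F g g (k + 1))) =
        (⊥ : LieIdeal F g).ucs 1 ⊔
          ⨆ k ∈ Finset.Icc 1 (m - 1),
            ((⊥ : LieIdeal F g).ucs (k + 1) ⊓ LieModule.lowerCentralSeries F g g k) :=
  stmt5_general F g
end

section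
/- Let g be a finite-dimensional nilpotent Lie algebra over a field F. Define i(g) = Σ_{k≥1} (Z_k(g) ∩ g^k) and J(g) = ∩_{k≥1} (Z_k(g) + g^k), where Z_k(g) is the upper central series and g^k the lower central series. Then J(g) is an abelian ideal of g, i(g) is an ideal of g, and [g, J(g)] ⊆ i(g). -/
/-!
Write `Zₖ` for the upper and `γₖ` for the lower central series. The three subspaces lemma gives
`⁅γᵢ, Z_{i+j+1}⁆ ⊆ Zⱼ`, in particular `⁅γᵢ, Z_{i+1}⁆ = 0`. By modularity,
`Z_{m+2} ∩ (Z_{m+1} + γ_{m+1}) = Z_{m+1} + (Z_{m+2} ∩ γ_{m+1})`,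
and since `γ` vanishes eventually, a descending induction on `m` shows `J ⊆ Z₁ + K` with
`K = ∑ₖ (Z_{k+2} ∩ γ_{k+1})`. Both claims about `J` then only concern `Z₁` and the pieces of `K`:
the bracket with `g` lowers the `Z`-index and raises the `γ`-index, and a piece
`Z_{k+2} ∩ γ_{k+1}` commutes with `Z_{k+1} + γ_{k+1} ⊇ J`.
-/

namespace LieSubmodule

variable {R L M : Type*} [CommRing R] [LieRing L] [LieAlgebra R L]
  [AddCommGroup M] [Module R M] [LieRingModule L M]

theorem lie_iSup {ι : Type*} (I : LieIdeal R L) (N : ι → LieSubmodule R L M) :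
    ⁅I, ⨆ i, N i⁆ = ⨆ i, ⁅I, N i⁆ := by
  refine le_antisymm ?_ (iSup_le fun i => mono_lie_right I (le_iSup N i))
  rw [lie_le_iff]
  intro x hx m hm
  induction hm using iSup_induction' with
  | mem i m hm => exact mem_iSup_of_mem i (lie_mem_lie hx hm)
  | zero => simp
  | add m m' _ _ hm hm' => rw [lie_add]; exact add_mem hm hm'

variable [LieModule R L M]

theorem lie_lie_le (I J : LieIdeal R L) (N : LieSubmodule R L M) :
    ⁅⁅I, J⁆, N⁆ ≤ ⁅I, ⁅J, N⁆⁆ ⊔ ⁅J, ⁅I, N⁆⁆ := by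
  rw [lie_le_iff]
  intro z hz m hm
  rw [← mem_toSubmodule, lieIdeal_oper_eq_linear_span'] at hz
  induction hz using Submodule.span_induction with
  | mem z hz =>
    obtain ⟨x, hx, y, hy, rfl⟩ := hz
    rw [lie_lie]
    exact sub_mem (mem_sup_left (lie_mem_lie hx (lie_mem_lie hy hm)))
      (mem_sup_right (lie_mem_lie hy (lie_mem_lie hx hm)))
  | zero => simp
  | add z z' _ _ hz hz' => rw [add_lie]; exact add_mem hz hz'
  | smul t z _ hz => rw [smul_lie]; exact SMulMemClass.smul_mem t hz

theorem ucs_le_ucs_succ (N : LieSubmodule R L M) (k : ℕ) : N.ucs k ≤ N.ucs (k + 1) := by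
  rw [ucs_succ]
  exact le_normalizer _

theorem monotone_ucs_s6 (N : LieSubmodule R L M) : Monotone (N.ucs ·) :=
  monotone_nat_of_le_succ N.ucs_le_ucs_succ

theorem top_lie_ucs_succ_le (N : LieSubmodule R L M) (k : ℕ) :
    ⁅(⊤ : LieIdeal R L), N.ucs (k + 1)⁆ ≤ N.ucs k := by
  rw [top_lie_le_iff_le_normalizer, ucs_succ]

theorem lowerCentralSeries_lie_ucs_le (N : LieSubmodule R L M) (i j : ℕ) :
    ⁅LieModule.lowerCentralSeries R L L i, N.ucs (i + j + 1)⁆ ≤ N.ucs j := by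
  induction i generalizing j with
  | zero => simpa using N.top_lie_ucs_succ_le j
  | succ i ih =>
    rw [LieModule.lowerCentralSeries_succ]
    refine (lie_lie_le _ _ _).trans (sup_le ?_ ?_)
    · calc _ ≤ ⁅(⊤ : LieIdeal R L), N.ucs (j + 1)⁆ :=
            mono_lie_right _ (by
              rw [show i + 1 + j + 1 = i + (j + 1) + 1 by omega]
              exact ih (j + 1))
        _ ≤ N.ucs j := N.top_lie_ucs_succ_le j
    · calc _ ≤ ⁅LieModule.lowerCentralSeries R L L i, N.ucs (i + j + 1)⁆ :=
            mono_lie_right _ (by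
              rw [show i + 1 + j + 1 = i + j + 1 + 1 by omega]
              exact N.top_lie_ucs_succ_le (i + j + 1))
        _ ≤ N.ucs j := ih j

theorem lowerCentralSeries_lie_ucs_succ_eq_bot (i : ℕ) :
    ⁅LieModule.lowerCentralSeries R L L i, (⊥ : LieSubmodule R L M).ucs (i + 1)⁆ = ⊥ :=
  le_bot_iff.mp ((⊥ : LieSubmodule R L M).lowerCentralSeries_lie_ucs_le i 0)

end LieSubmodule

namespace LieModule

open LieSubmodule

variable (R L M : Type*) [CommRing R] [LieRing L] [LieAlgebra R L]
  [AddCommGroup M] [Module R M] [LieRingModule L M] [LieModule R L M]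

/-- `J(M)`; the index is shifted so that `k` ranges over `ℕ`. -/
def iInfUcsSupLcs : LieSubmodule R L M :=
  ⨅ k : ℕ, ((⊥ : LieSubmodule R L M).ucs (k + 1) ⊔ lowerCentralSeries R L M (k + 1))

/-- `i(M)`; the index is shifted so that `k` ranges over `ℕ`. -/
def iSupUcsInfLcs : LieSubmodule R L M :=
  ⨆ k : ℕ, ((⊥ : LieSubmodule R L M).ucs (k + 1) ⊓ lowerCentralSeries R L M (k + 1))

theorem iInfUcsSupLcs_le_ucs_sup_lcs (k : ℕ) :
    iInfUcsSupLcs R L M ≤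
      (⊥ : LieSubmodule R L M).ucs (k + 1) ⊔ lowerCentralSeries R L M (k + 1) :=
  iInf_le _ k

theorem iSup_ucs_inf_lcs_le_ucs_sup_lcs (m : ℕ) :
    ⨆ k : ℕ, ((⊥ : LieSubmodule R L M).ucs (k + 2) ⊓ lowerCentralSeries R L M (k + 1)) ≤
      (⊥ : LieSubmodule R L M).ucs (m + 1) ⊔ lowerCentralSeries R L M (m + 1) := by
  refine iSup_le fun k => ?_
  rcases lt_or_ge k m with hk | hk
  · exact inf_le_left.trans (le_sup_of_le_left (monotone_ucs_s6 _ (by omega)))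
  · exact inf_le_right.trans
      (le_sup_of_le_right (antitone_lowerCentralSeries R L M (by omega)))

theorem iInfUcsSupLcs_le [IsNilpotent L M] :
    iInfUcsSupLcs R L M ≤ (⊥ : LieSubmodule R L M).ucs 1 ⊔
      ⨆ k : ℕ, ((⊥ : LieSubmodule R L M).ucs (k + 2) ⊓ lowerCentralSeries R L M (k + 1)) := by
  set K := ⨆ k : ℕ, ((⊥ : LieSubmodule R L M).ucs (k + 2) ⊓ lowerCentralSeries R L M (k + 1))
  obtain ⟨c, hc⟩ := IsNilpotent.nilpotent R L M
  suffices ∀ m ≤ c, iInfUcsSupLcs R L M ≤ (⊥ : LieSubmodule R L M).ucs (m + 1) ⊔ K from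
    this 0 c.zero_le
  intro m hm
  induction hm using Nat.decreasingInduction with
  | self =>
    refine (iInfUcsSupLcs_le_ucs_sup_lcs R L M c).trans (sup_le_sup_left ?_ _)
    exact (antitone_lowerCentralSeries R L M c.le_succ).trans (hc.le.trans bot_le)
  | of_succ m _ ih =>
    calc iInfUcsSupLcs R L M
        ≤ ((⊥ : LieSubmodule R L M).ucs (m + 2) ⊔ K) ⊓
            ((⊥ : LieSubmodule R L M).ucs (m + 1) ⊔ lowerCentralSeries R L M (m + 1)) :=
          le_inf ih (iInfUcsSupLcs_le_ucs_sup_lcs R L M m)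
      _ = K ⊔ ((⊥ : LieSubmodule R L M).ucs (m + 1) ⊔
            lowerCentralSeries R L M (m + 1) ⊓ (⊥ : LieSubmodule R L M).ucs (m + 2)) := by
          rw [sup_comm, sup_inf_assoc_of_le _ (iSup_ucs_inf_lcs_le_ucs_sup_lcs R L M m),
            inf_comm, sup_inf_assoc_of_le _ (ucs_le_ucs_succ _ _)]
      _ ≤ (⊥ : LieSubmodule R L M).ucs (m + 1) ⊔ K := by
          refine sup_le le_sup_right (sup_le_sup_left ?_ _)
          rw [inf_comm]
          exact le_iSup (fun k : ℕ => (⊥ : LieSubmodule R L M).ucs (k + 2) ⊓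
            lowerCentralSeries R L M (k + 1)) m

theorem top_lie_iInfUcsSupLcs_le [IsNilpotent L M] :
    ⁅(⊤ : LieIdeal R L), iInfUcsSupLcs R L M⁆ ≤ iSupUcsInfLcs R L M := by
  refine (mono_lie_right _ (iInfUcsSupLcs_le R L M)).trans ?_
  rw [lie_sup, lie_iSup]
  refine sup_le ((top_lie_ucs_succ_le _ 0).trans bot_le) (iSup_mono fun k => ?_)
  exact (lie_inf _ _ _).trans (inf_le_inf (top_lie_ucs_succ_le _ (k + 1)) (lie_le_right _ _))

theorem iInfUcsSupLcs_lie_self [LieRing.IsNilpotent L] :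
    ⁅iInfUcsSupLcs R L L, iInfUcsSupLcs R L L⁆ = ⊥ := by
  set J := iInfUcsSupLcs R L L
  have hcenter : ⁅J, (⊥ : LieIdeal R L).ucs 1⁆ ≤ ⊥ :=
    (mono_lie_left _ le_top).trans (top_lie_ucs_succ_le _ 0)
  have hpiece (k : ℕ) :
      ⁅J, (⊥ : LieIdeal R L).ucs (k + 2) ⊓ lowerCentralSeries R L L (k + 1)⁆ ≤ ⊥ := by
    refine (mono_lie_left _ (iInfUcsSupLcs_le_ucs_sup_lcs R L L k)).trans ?_
    rw [sup_lie]
    refine (sup_le ?_ (mono_lie_right _ inf_le_left)).trans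
      (lowerCentralSeries_lie_ucs_succ_eq_bot (k + 1)).le
    rw [lie_comm]
    exact mono_lie inf_le_right (ucs_le_ucs_succ _ _)
  refine le_bot_iff.mp ((mono_lie_right _ (iInfUcsSupLcs_le R L L)).trans ?_)
  rw [lie_sup, lie_iSup]
  exact sup_le hcenter (iSup_le hpiece)

end LieModule

theorem stmt6_general (F : Type*) [Field F]
    (g : Type*) [LieRing g] [LieAlgebra F g]
    [LieRing.IsNilpotent g] :
    let iI : LieIdeal F g := ⨆ k : ℕ, ((⊥ : LieIdeal F g).ucs (k + 1) ⊓
      LieModule.lowerCentralSeries F g g (k + 1))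
    let JI : LieIdeal F g := ⨅ k : ℕ, ((⊥ : LieIdeal F g).ucs (k + 1) ⊔
      LieModule.lowerCentralSeries F g g (k + 1))
    -- `J(g)` is abelian
    (∀ x y : g, x ∈ JI → y ∈ JI → ⁅x, y⁆ = 0) ∧
    -- `i(g)` is an ideal of `g`
    (∀ x y : g, y ∈ iI → ⁅x, y⁆ ∈ iI) ∧
    -- `[g, J(g)] ⊆ i(g)`
    (∀ x y : g, y ∈ JI → ⁅x, y⁆ ∈ iI) := by
  intro iI JI
  refine ⟨fun x y hx hy => ?_, fun x y hy => iI.lie_mem hy, fun x y hy => ?_⟩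
  · exact (LieSubmodule.lie_eq_bot_iff _ _).mp (LieModule.iInfUcsSupLcs_lie_self F g) x hx y hy
  · exact LieModule.top_lie_iInfUcsSupLcs_le F g g
      (LieSubmodule.lie_mem_lie (LieSubmodule.mem_top x) hy)

/-- for a finite-dimensional nilpotent Lie algebra `g`, the canonical
ideal `J(g)` is abelian, `i(g)` is an ideal, and `[g, J(g)] ⊆ i(g)`. -/
theorem stmt6 (F : Type*) [Field F] [CharZero F]
    (g : Type*) [LieRing g] [LieAlgebra F g] [FiniteDimensional F g]
    [LieRing.IsNilpotent g] :
    let iI : LieIdeal F g := ⨆ k : ℕ, ((⊥ : LieIdeal F g).ucs (k + 1) ⊓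
      LieModule.lowerCentralSeries F g g (k + 1))
    let JI : LieIdeal F g := ⨅ k : ℕ, ((⊥ : LieIdeal F g).ucs (k + 1) ⊔
      LieModule.lowerCentralSeries F g g (k + 1))
    -- `J(g)` is abelian
    (∀ x y : g, x ∈ JI → y ∈ JI → ⁅x, y⁆ = 0) ∧
    -- `i(g)` is an ideal of `g`
    (∀ x y : g, y ∈ iI → ⁅x, y⁆ ∈ iI) ∧
    -- `[g, J(g)] ⊆ i(g)`
    (∀ x y : g, y ∈ JI → ⁅x, y⁆ ∈ iI) :=
  stmt6_general F g
end

section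
/- Let g be a finite-dimensional nilpotent Lie algebra over a field F admitting an invariant metric B, i.e. a non-degenerate symmetric bilinear form B : g × g → F with B([x,y],z) = −B(y,[x,z]) for all x, y, z in g. Define i(g) = Σ_{k≥1} (Z_k(g) ∩ g^k) and J(g) = ∩_{k≥1} (Z_k(g) + g^k), where Z_k(g) is the upper central series and g^k the lower central series. Then the orthogonal complement of i(g) with respect to B equals J(g): i(g)^⊥ = J(g). -/
/-!
The invariance identity `B ⁅x, n⁆ m = -B n ⁅x, m⁆` shows that `m` is orthogonal to
`⁅g, g^k⁆` exactly when every `⁅x, m⁆` is orthogonal to `g^k`; by induction on `k` this gives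
`(g^k)^⊥ = Z_k(g)`, and hence `Z_k(g)^⊥ = g^k` since `^⊥` is an involution for a nondegenerate
form in finite dimension. Taking orthogonal complements turns sums into intersections and,
again by involutivity, intersections into sums, so
`i(g)^⊥ = ⋂_k (Z_k(g) ∩ g^k)^⊥ = ⋂_k (g^k + Z_k(g)) = J(g)`.
-/

namespace LieAlgebra.InvariantForm

open LieModule LieSubmodule

section ring

variable {R L M : Type*} [CommRing R] [LieRing L]
  [AddCommGroup M] [Module R M] [LieRingModule L M]
  (Φ : LinearMap.BilinForm R M) (hΦ_inv : Φ.lieInvariant L)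

lemma mem_orthogonal_iff_le_ker (N : LieSubmodule R L M) (m : M) :
    m ∈ orthogonal Φ hΦ_inv N ↔ (N : Submodule R M) ≤ LinearMap.ker (Φ.flip m) :=
  Iff.rfl

lemma orthogonal_sup (N N' : LieSubmodule R L M) :
    orthogonal Φ hΦ_inv (N ⊔ N') = orthogonal Φ hΦ_inv N ⊓ orthogonal Φ hΦ_inv N' := by
  ext m
  simp only [mem_inf, mem_orthogonal_iff_le_ker, sup_toSubmodule, sup_le_iff]

lemma orthogonal_iSup {ι : Type*} (N : ι → LieSubmodule R L M) :
    orthogonal Φ hΦ_inv (⨆ i, N i) = ⨅ i, orthogonal Φ hΦ_inv (N i) := by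
  ext m
  simp only [mem_iInf, mem_orthogonal_iff_le_ker, iSup_toSubmodule, iSup_le_iff]

variable [LieAlgebra R L] [LieModule R L M]

lemma orthogonal_lowerCentralSeries (hΦ_sep : Φ.SeparatingRight) (k : ℕ) :
    orthogonal Φ hΦ_inv (lowerCentralSeries R L M k) = (⊥ : LieSubmodule R L M).ucs k := by
  induction k with
  | zero =>
    ext m
    simp only [lowerCentralSeries_zero, ucs_zero, mem_orthogonal, mem_top, true_implies, mem_bot]
    exact ⟨hΦ_sep m, by rintro rfl x; exact map_zero _⟩
  | succ k ih =>
    ext m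
    rw [mem_orthogonal_iff_le_ker, lowerCentralSeries_succ, lieIdeal_oper_eq_linear_span',
      Submodule.span_le, ucs_succ, mem_normalizer]
    simp_rw [← ih, mem_orthogonal]
    constructor
    · intro h x n hn
      rw [← neg_eq_zero, ← hΦ_inv]
      exact h ⟨x, trivial, n, hn, rfl⟩
    · rintro h _ ⟨x, -, n, hn, rfl⟩
      change Φ ⁅x, n⁆ m = 0
      rw [hΦ_inv, h x n hn, neg_zero]

end ring

section field

variable {K L M : Type*} [Field K] [LieRing L]
  [AddCommGroup M] [Module K M] [LieRingModule L M] [FiniteDimensional K M]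
  {Φ : LinearMap.BilinForm K M} (hΦ_inv : Φ.lieInvariant L)

lemma orthogonal_orthogonal (hΦ_nondeg : Φ.Nondegenerate) (hΦ_refl : Φ.IsRefl)
    (N : LieSubmodule K L M) :
    orthogonal Φ hΦ_inv (orthogonal Φ hΦ_inv N) = N :=
  toSubmodule_injective (LinearMap.BilinForm.orthogonal_orthogonal hΦ_nondeg hΦ_refl N)

lemma orthogonal_inf (hΦ_nondeg : Φ.Nondegenerate) (hΦ_refl : Φ.IsRefl)
    (N N' : LieSubmodule K L M) :
    orthogonal Φ hΦ_inv (N ⊓ N') = orthogonal Φ hΦ_inv N ⊔ orthogonal Φ hΦ_inv N' := by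
  conv_lhs => rw [← orthogonal_orthogonal hΦ_inv hΦ_nondeg hΦ_refl N,
    ← orthogonal_orthogonal hΦ_inv hΦ_nondeg hΦ_refl N', ← orthogonal_sup,
    orthogonal_orthogonal hΦ_inv hΦ_nondeg hΦ_refl]

variable [LieAlgebra K L] [LieModule K L M]

lemma orthogonal_ucs (hΦ_nondeg : Φ.Nondegenerate) (hΦ_refl : Φ.IsRefl) (k : ℕ) :
    orthogonal Φ hΦ_inv ((⊥ : LieSubmodule K L M).ucs k) = lowerCentralSeries K L M k := by
  rw [← orthogonal_lowerCentralSeries Φ hΦ_inv hΦ_nondeg.2,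
    orthogonal_orthogonal hΦ_inv hΦ_nondeg hΦ_refl]

lemma orthogonal_ucs_inf_lowerCentralSeries (hΦ_nondeg : Φ.Nondegenerate) (hΦ_refl : Φ.IsRefl)
    (k : ℕ) :
    orthogonal Φ hΦ_inv ((⊥ : LieSubmodule K L M).ucs k ⊓ lowerCentralSeries K L M k) =
      (⊥ : LieSubmodule K L M).ucs k ⊔ lowerCentralSeries K L M k := by
  rw [orthogonal_inf hΦ_inv hΦ_nondeg hΦ_refl, orthogonal_ucs hΦ_inv hΦ_nondeg hΦ_refl,
    orthogonal_lowerCentralSeries Φ hΦ_inv hΦ_nondeg.2, sup_comm]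

end field

end LieAlgebra.InvariantForm

open LieAlgebra.InvariantForm in
theorem stmt7_general (F : Type*) [Field F]
    (g : Type*) [LieRing g] [LieAlgebra F g] [FiniteDimensional F g]
    (B : g →ₗ[F] g →ₗ[F] F)
    (hsym : ∀ x y : g, B x y = B y x)
    (hnondeg : ∀ x : g, (∀ y : g, B x y = 0) → x = 0)
    (hinv : ∀ x y z : g, B ⁅x, y⁆ z = - B y ⁅x, z⁆) :
    let iI : LieIdeal F g := ⨆ k : ℕ, ((⊥ : LieIdeal F g).ucs (k + 1) ⊓
      LieModule.lowerCentralSeries F g g (k + 1))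
    let JI : LieIdeal F g := ⨅ k : ℕ, ((⊥ : LieIdeal F g).ucs (k + 1) ⊔
      LieModule.lowerCentralSeries F g g (k + 1))
    ∀ x : g, (∀ w : g, w ∈ iI → B x w = 0) ↔ x ∈ JI := by
  intro iI JI x
  have hrefl : B.IsRefl := fun a b h => (hsym b a).trans h
  have hnd : B.Nondegenerate := ⟨hnondeg, fun y hy => hnondeg y fun x => (hsym y x).trans (hy x)⟩
  have hB : LinearMap.BilinForm.lieInvariant g B := hinv
  have hJI : orthogonal B hB iI = JI := by
    simp only [iI, JI, orthogonal_iSup, orthogonal_ucs_inf_lowerCentralSeries hB hnd hrefl]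
  rw [← hJI, mem_orthogonal]
  simp only [hsym x]

/-- if a finite-dimensional nilpotent Lie algebra `g` carries an
invariant metric `B`, then the orthogonal complement of `i(g)` is `J(g)`. -/
theorem stmt7 (F : Type*) [Field F] [CharZero F]
    (g : Type*) [LieRing g] [LieAlgebra F g] [FiniteDimensional F g]
    [LieRing.IsNilpotent g]
    (B : g →ₗ[F] g →ₗ[F] F)
    (hsym : ∀ x y : g, B x y = B y x)
    (hnondeg : ∀ x : g, (∀ y : g, B x y = 0) → x = 0)
    (hinv : ∀ x y z : g, B ⁅x, y⁆ z = - B y ⁅x, z⁆) :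
    let iI : LieIdeal F g := ⨆ k : ℕ, ((⊥ : LieIdeal F g).ucs (k + 1) ⊓
      LieModule.lowerCentralSeries F g g (k + 1))
    let JI : LieIdeal F g := ⨅ k : ℕ, ((⊥ : LieIdeal F g).ucs (k + 1) ⊔
      LieModule.lowerCentralSeries F g g (k + 1))
    ∀ x : g, (∀ w : g, w ∈ iI → B x w = 0) ↔ x ∈ JI :=
  stmt7_general F g B hsym hnondeg hinv
end

section
/- Let (g, [·,·], B) be a quadratic Lie algebra over a field F possessing abelian ideals i ⊆ J with J = i^⊥ and [g, J] ⊆ i. Let h be an isotropic subspace of g with g = h ⊕ J (direct sum of vector spaces), and for x, y in h write [x,y] = [x,y]_h + Λ(x,y) with [x,y]_h ∈ h and Λ(x,y) ∈ J, so that [·,·]_h is a Lie bracket on h. Then the map φ : i → h* defined by φ(α)(y) = B(α, y) for α in i and y in h is a linear isomorphism which intertwines the action of h: φ([x,α]) = ad_h*(x)(φ(α)) for all x in h and α in i, where ad_h*(x)(ξ)(y) = −ξ([x,y]_h). In other words, φ is an isomorphism of h-modules from (i, ρ) to (h*, ad_h*), where ρ(x)(α) = [x,α]. -/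
/-!
`φ` is the pairing `B` restricted to `i × h`. If `α ∈ i` pairs trivially with `h`, it is
orthogonal to `h` and to `J = i^⊥`, hence to all of `g = h ⊕ J`, so `α = 0`; and
`dim i = dim g - dim i^⊥ = dim h`, so `φ` is bijective. Equivariance is invariance of `B`:
`B([x,α], y) = -B(α, [x,y]_h + Λ(x,y))`, and `Λ(x,y) ∈ J` is orthogonal to `α`.
-/

namespace LinearMap.BilinForm

open Module

variable {K V : Type*} [Field K] [AddCommGroup V] [Module K V] {B : LinearMap.BilinForm K V}
  {I H : Submodule K V}

theorem injective_domRestrict₁₂_of_codisjoint_orthogonal (hB : B.SeparatingLeft)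
    (hc : Codisjoint H (B.orthogonal I)) : Function.Injective (B.domRestrict₁₂ I H) := by
  rw [← LinearMap.ker_eq_bot, Submodule.eq_bot_iff]
  rintro ⟨α, hα⟩ hker
  suffices α = 0 by simpa using this
  refine hB α fun z => ?_
  obtain ⟨y, w, hy, hw, rfl⟩ := Submodule.codisjoint_iff_exists_add_eq.mp hc z
  have hαy : B α y = 0 := LinearMap.congr_fun hker ⟨y, hy⟩
  rw [map_add, hαy, hw α hα, add_zero]

theorem bijective_domRestrict₁₂_of_isCompl_orthogonal [FiniteDimensional K V]
    (hB : B.Nondegenerate) (hc : IsCompl H (B.orthogonal I)) :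
    Function.Bijective (B.domRestrict₁₂ I H) := by
  have hinj := injective_domRestrict₁₂_of_codisjoint_orthogonal hB.1 hc.codisjoint
  have hdim : finrank K I = finrank K (Dual K H) := by
    have hI : finrank K I ≤ finrank K V := Submodule.finrank_le I
    have hsum := Submodule.finrank_add_eq_of_isCompl hc
    rw [finrank_orthogonal hB] at hsum
    rw [Subspace.dual_finrank_eq]
    omega
  exact ⟨hinj, (LinearMap.injective_iff_surjective_of_finrank_eq_finrank hdim).1 hinj⟩

end LinearMap.BilinForm

open LinearMap.BilinForm in
theorem stmt8_general (F : Type*) [Field F]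
    (g : Type*) [LieRing g] [LieAlgebra F g] [FiniteDimensional F g]
    (B : g →ₗ[F] g →ₗ[F] F)
    (hsym : ∀ x y : g, B x y = B y x)
    (hnondeg : ∀ x : g, (∀ y : g, B x y = 0) → x = 0)
    (hinv : ∀ x y z : g, B ⁅x, y⁆ z = - B y ⁅x, z⁆)
    (i J : LieIdeal F g) (hiJ : i ≤ J)
    (hperp : ∀ x : g, x ∈ J ↔ ∀ w : g, w ∈ i → B x w = 0)
    (hgJ : ∀ x w : g, w ∈ J → ⁅x, w⁆ ∈ i)
    (h : Submodule F g)
    (hcompl : IsCompl h (J : Submodule F g))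
    (brh : h → h → h) (Λ : h → h → J)
    (hdec : ∀ x y : h, ⁅(x : g), (y : g)⁆ = (brh x y : g) + ((Λ x y : g))) :
    let φ : i → Module.Dual F h := fun α => (B (α : g)).comp h.subtype
    -- `φ` is a linear isomorphism
    (∀ α β : i, φ (α + β) = φ α + φ β) ∧
    (∀ (c : F) (α : i), φ (c • α) = c • φ α) ∧
    Function.Bijective φ ∧
    -- `φ` intertwines `ρ(x)(α) = ⁅x, α⁆` with the coadjoint action
    -- `ad_h*(x)(ξ)(y) = −ξ([x,y]_h)`
    (∀ (x : h) (α : i) (y : h),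
      φ (⟨⁅(x : g), (α : g)⁆, hgJ x α (hiJ α.2)⟩ : i) y = - φ α (brh x y)) := by
  intro φ
  have hJ : (J : Submodule F g) = orthogonal B i := by
    ext x
    exact (hperp x).trans (forall₂_congr fun w _ => by rw [hsym])
  have hB : B.Nondegenerate :=
    (LinearMap.IsRefl.nondegenerate_iff_separatingLeft fun x y hxy => by rwa [hsym]).2 hnondeg
  let φL := B.domRestrict₁₂ i h
  refine ⟨map_add φL, map_smul φL, bijective_domRestrict₁₂_of_isCompl_orthogonal hB
    (hJ ▸ hcompl), fun x α y => ?_⟩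
  have hΛ : B α (Λ x y) = 0 := (hJ ▸ (Λ x y).2 : (Λ x y : g) ∈ orthogonal B i) α α.2
  calc B ⁅(x : g), (α : g)⁆ y = -B α ⁅(x : g), (y : g)⁆ := hinv _ _ _
    _ = -B α (brh x y) := by rw [hdec, map_add, hΛ, add_zero]

/-- in a quadratic Lie algebra with abelian ideals `i ⊆ J`, `J = i^⊥`,
`[g, J] ⊆ i`, and an isotropic complement `h` of `J`, the map `φ : i → h*`,
`φ(α)(y) = B(α, y)`, is an isomorphism of `h`-modules onto the coadjoint module. -/
theorem stmt8 (F : Type*) [Field F] [CharZero F]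
    (g : Type*) [LieRing g] [LieAlgebra F g] [FiniteDimensional F g]
    (B : g →ₗ[F] g →ₗ[F] F)
    (hsym : ∀ x y : g, B x y = B y x)
    (hnondeg : ∀ x : g, (∀ y : g, B x y = 0) → x = 0)
    (hinv : ∀ x y z : g, B ⁅x, y⁆ z = - B y ⁅x, z⁆)
    (i J : LieIdeal F g) (hiJ : i ≤ J)
    (hJab : ∀ x y : g, x ∈ J → y ∈ J → ⁅x, y⁆ = 0)
    (hperp : ∀ x : g, x ∈ J ↔ ∀ w : g, w ∈ i → B x w = 0)
    (hgJ : ∀ x w : g, w ∈ J → ⁅x, w⁆ ∈ i)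
    (h : Submodule F g)
    (hiso : ∀ x y : g, x ∈ h → y ∈ h → B x y = 0)
    (hcompl : IsCompl h (J : Submodule F g))
    (brh : h → h → h) (Λ : h → h → J)
    (hdec : ∀ x y : h, ⁅(x : g), (y : g)⁆ = (brh x y : g) + ((Λ x y : g))) :
    let φ : i → Module.Dual F h := fun α => (B (α : g)).comp h.subtype
    -- `φ` is a linear isomorphism
    (∀ α β : i, φ (α + β) = φ α + φ β) ∧
    (∀ (c : F) (α : i), φ (c • α) = c • φ α) ∧
    Function.Bijective φ ∧
    -- `φ` intertwines `ρ(x)(α) = ⁅x, α⁆` with the coadjoint action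
    -- `ad_h*(x)(ξ)(y) = −ξ([x,y]_h)`
    (∀ (x : h) (α : i) (y : h),
      φ (⟨⁅(x : g), (α : g)⁆, hgJ x α (hiJ α.2)⟩ : i) y = - φ α (brh x y)) :=
  stmt8_general F g B hsym hnondeg hinv i J hiJ hperp hgJ h hcompl brh Λ hdec
end

section
/- Let h(λ, μ, φ, ad_h*) be a Lie algebra on h ⊕ a ⊕ h* constructed as an abelian extension: (h, [·,·]_h) a Lie algebra, a a trivial h-module, the coadjoint representation ad_h* of h on h*, φ : h → Hom(a, h*) a 1-cocycle, and (λ, μ) a 2-cocycle, with bracket [x,y] = [x,y]_h + λ(x,y) + μ(x,y) and [x, u + α] = φ(x)(u) + ad_h*(x)(α) for x, y ∈ h, u ∈ a, α ∈ h*, and zero bracket on a ⊕ h*. Let B_a be a non-degenerate symmetric bilinear form on a, and define the symmetric non-degenerate bilinear form B on h ⊕ a ⊕ h* by B(x + u + α, y + v + β) = α(y) + β(x) + B_a(u, v). Then B is invariant (i.e. B([X,Y],Z) = −B(Y,[X,Z]) for all X, Y, Z) if and only if both of the following hold for all x, y, z in h and u in a: (1) φ(x)(u)(y) = −B_a(λ(x,y),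 u); and (2) μ(x,y)(z) = μ(y,z)(x). -/
/-! In `B([X,Y],Z) + B(Y,[X,Z])` the `h*`-components cancel by antisymmetry of `[·,·]_h`, and
what remains splits into a `μ`-part `μ(x,y)(z) + μ(x,z)(y)` and `φ`-parts that are tested
separately on elements of `h` and of `a`. For `μ`, skew in its first two arguments, vanishing of
the `μ`-part (skewness in the last two arguments) is the same as cyclic invariance. -/

namespace AbelianExtension

variable {R L M : Type*} [CommRing R] [LieRing L] [LieAlgebra R L]
  [AddCommGroup M] [Module R M]

def coadjoint (x : L) (ξ : Module.Dual R L) : Module.Dual R L :=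
  -(ξ ∘ₗ LieAlgebra.ad R L x)

def bracket (φ : L →ₗ[R] M →ₗ[R] Module.Dual R L) (la : L →ₗ[R] L →ₗ[R] M)
    (mu : L →ₗ[R] L →ₗ[R] Module.Dual R L) (p q : L × M × Module.Dual R L) :
    L × M × Module.Dual R L :=
  (⁅p.1, q.1⁆, la p.1 q.1, mu p.1 q.1 + φ p.1 q.2.1 - φ q.1 p.2.1
    + coadjoint p.1 q.2.2 - coadjoint q.1 p.2.2)

def form (B : M →ₗ[R] M →ₗ[R] R) (p q : L × M × Module.Dual R L) : R :=
  p.2.2 q.1 + q.2.2 p.1 + B p.2.1 q.2.1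

variable {φ : L →ₗ[R] M →ₗ[R] Module.Dual R L} {la : L →ₗ[R] L →ₗ[R] M}
  {mu : L →ₗ[R] L →ₗ[R] Module.Dual R L} {B : M →ₗ[R] M →ₗ[R] R}

theorem form_bracket_add_form_bracket (hB : ∀ u v, B u v = B v u)
    (X Y Z : L × M × Module.Dual R L) :
    form B (bracket φ la mu X Y) Z + form B Y (bracket φ la mu X Z) =
      (mu X.1 Y.1 Z.1 + mu X.1 Z.1 Y.1)
        + (φ X.1 Y.2.1 Z.1 + B (la X.1 Z.1) Y.2.1)
        + (φ X.1 Z.2.1 Y.1 + B (la X.1 Y.1) Z.2.1)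
        - (φ Y.1 X.2.1 Z.1 + φ Z.1 X.2.1 Y.1) := by
  obtain ⟨x, u, α⟩ := X
  obtain ⟨y, v, β⟩ := Y
  obtain ⟨z, w, γ⟩ := Z
  have hα : α ⁅y, z⁆ + α ⁅z, y⁆ = 0 := by rw [← lie_skew y z, map_neg, neg_add_cancel]
  simp only [form, bracket, LinearMap.add_apply, LinearMap.sub_apply, LinearMap.neg_apply,
    LinearMap.comp_apply, coadjoint, LieAlgebra.ad_apply, hB v]
  linear_combination hα

theorem cyclic_iff_add_swap_eq_zero (hmu : ∀ x y, mu x y = -mu y x) :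
    (∀ x y z, mu x y z = mu y z x) ↔ ∀ x y z, mu x y z + mu x z y = 0 := by
  constructor
  · intro hcyc x y z
    rw [hcyc x z y, hmu z y, LinearMap.neg_apply, hcyc x y z, add_neg_cancel]
  · intro hswap x y z
    rw [eq_comm, eq_neg_of_add_eq_zero_left (hswap y z x), hmu y x, LinearMap.neg_apply,
      neg_neg]

theorem form_bracket_invariant_iff (hB : ∀ u v, B u v = B v u)
    (hla : ∀ x y, la x y = -la y x) (hmu : ∀ x y, mu x y = -mu y x) :
    (∀ X Y Z : L × M × Module.Dual R L,
        form B (bracket φ la mu X Y) Z = -form B Y (bracket φ la mu X Z)) ↔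
      (∀ x y u, φ x u y = -B (la x y) u) ∧ ∀ x y z, mu x y z = mu y z x := by
  simp only [eq_neg_iff_add_eq_zero, form_bracket_add_form_bracket hB,
    cyclic_iff_add_swap_eq_zero hmu]
  constructor
  · intro H
    refine ⟨fun x y u => ?_, fun x y z => ?_⟩
    · simpa using H (x, 0, 0) (0, u, 0) (y, 0, 0)
    · simpa using H (x, 0, 0) (y, 0, 0) (z, 0, 0)
  · rintro ⟨hφ, hswap⟩ ⟨x, u, -⟩ ⟨y, v, -⟩ ⟨z, w, -⟩
    have hla' : B (la y z) u + B (la z y) u = 0 := by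
      rw [hla y z, map_neg, LinearMap.neg_apply, neg_add_cancel]
    linear_combination hswap x y z + hφ x z v + hφ x y w - hφ y z u - hφ z y u + hla'

end AbelianExtension

theorem stmt9_general (F : Type*) [Field F]
    (h : Type*) [LieRing h] [LieAlgebra F h]
    (a : Type*) [AddCommGroup a] [Module F a]
    (Ba : a →ₗ[F] a →ₗ[F] F)
    (hBasym : ∀ u v : a, Ba u v = Ba v u)
    (φ : h →ₗ[F] a →ₗ[F] Module.Dual F h)
    (la : h →ₗ[F] h →ₗ[F] a) (hla : ∀ x y : h, la x y = - la y x)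
    (mu : h →ₗ[F] h →ₗ[F] Module.Dual F h) (hmu : ∀ x y : h, mu x y = - mu y x) :
    -- the coadjoint action and the bracket of `h(λ, μ, φ, ad_h*)`
    let coad : h → Module.Dual F h → Module.Dual F h :=
      fun x ξ => - (ξ ∘ₗ LieAlgebra.ad F h x)
    let br : h × a × Module.Dual F h → h × a × Module.Dual F h →
        h × a × Module.Dual F h :=
      fun p q => (⁅p.1, q.1⁆, la p.1 q.1,
        mu p.1 q.1 + φ p.1 q.2.1 - φ q.1 p.2.1 + coad p.1 q.2.2 - coad q.1 p.2.2)
    let Bm : h × a × Module.Dual F h → h × a × Module.Dual F h → F :=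
      fun p q => p.2.2 q.1 + q.2.2 p.1 + Ba p.2.1 q.2.1
    -- invariance of `B` is equivalent to the two conditions
    ((∀ X Y Z : h × a × Module.Dual F h, Bm (br X Y) Z = - Bm Y (br X Z)) ↔
      ((∀ (x y : h) (u : a), φ x u y = - Ba (la x y) u) ∧
       (∀ x y z : h, mu x y z = mu y z x))) :=
  AbelianExtension.form_bracket_invariant_iff hBasym hla hmu

/-- on the abelian extension `h(λ, μ, φ, ad_h*)` on `h ⊕ a ⊕ h*`, the
bilinear form `B(x+u+α, y+v+β) = α(y) + β(x) + B_a(u,v)` is invariant iff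
`φ(x)(u)(y) = −B_a(λ(x,y), u)` and `μ(x,y)(z) = μ(y,z)(x)`. -/
theorem stmt9 (F : Type*) [Field F] [CharZero F]
    (h : Type*) [LieRing h] [LieAlgebra F h] [FiniteDimensional F h]
    (a : Type*) [AddCommGroup a] [Module F a] [FiniteDimensional F a]
    (Ba : a →ₗ[F] a →ₗ[F] F)
    (hBasym : ∀ u v : a, Ba u v = Ba v u)
    (hBand : ∀ u : a, (∀ v : a, Ba u v = 0) → u = 0)
    (φ : h →ₗ[F] a →ₗ[F] Module.Dual F h)
    -- `φ` is a 1-cocycle for the coadjoint representation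
    (hφ : ∀ (x y : h) (u : a) (z : h),
      φ ⁅x, y⁆ u z = - φ y u ⁅x, z⁆ + φ x u ⁅y, z⁆)
    (la : h →ₗ[F] h →ₗ[F] a) (hla : ∀ x y : h, la x y = - la y x)
    (mu : h →ₗ[F] h →ₗ[F] Module.Dual F h) (hmu : ∀ x y : h, mu x y = - mu y x)
    -- `(λ, μ)` is a 2-cocycle
    (hcoc1 : ∀ x y z : h, la ⁅x, y⁆ z + la ⁅y, z⁆ x + la ⁅z, x⁆ y = 0)
    (hcoc2 : ∀ x y z w : h,
      φ x (la y z) w - φ y (la x z) w + φ z (la x y) w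
        - mu y z ⁅x, w⁆ + mu x z ⁅y, w⁆ - mu x y ⁅z, w⁆
        - mu ⁅x, y⁆ z w + mu ⁅x, z⁆ y w - mu ⁅y, z⁆ x w = 0) :
    -- the coadjoint action and the bracket of `h(λ, μ, φ, ad_h*)`
    let coad : h → Module.Dual F h → Module.Dual F h :=
      fun x ξ => - (ξ ∘ₗ LieAlgebra.ad F h x)
    let br : h × a × Module.Dual F h → h × a × Module.Dual F h →
        h × a × Module.Dual F h :=
      fun p q => (⁅p.1, q.1⁆, la p.1 q.1,
        mu p.1 q.1 + φ p.1 q.2.1 - φ q.1 p.2.1 + coad p.1 q.2.2 - coad q.1 p.2.2)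
    let Bm : h × a × Module.Dual F h → h × a × Module.Dual F h → F :=
      fun p q => p.2.2 q.1 + q.2.2 p.1 + Ba p.2.1 q.2.1
    -- invariance of `B` is equivalent to the two conditions
    ((∀ X Y Z : h × a × Module.Dual F h, Bm (br X Y) Z = - Bm Y (br X Z)) ↔
      ((∀ (x y : h) (u : a), φ x u y = - Ba (la x y) u) ∧
       (∀ x y z : h, mu x y z = mu y z x))) :=
  stmt9_general F h a Ba hBasym φ la hla mu hmu
end

section
/- Let g be a Lie algebra over a field F and let S be a commutative associative F-algebra with unit 1. Suppose B̄ is an invariant symmetric bilinear form on the current Lie algebra g ⊗ S (bracket [X ⊗ s, Y ⊗ t] = [X,Y] ⊗ st), and for s, t in S define L(s,t)(X,Y) = B̄(X ⊗ s, Y ⊗ t). Then for all s, t in S, all X in the derived subalgebra [g,g], and all Y in g: L(s,t)(X,Y) = L(t,s)(X,Y) = L(st,1)(X,Y) = L(s,t)(Y,X). -/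
/-!
Invariance of `B̄` under the bracket `⁅s ⊗ A, 1 ⊗ B⁆ = s ⊗ ⁅A, B⁆` moves the coefficient `s` of a
bracket into the second slot, where it meets `t`:
`B̄(s ⊗ ⁅A, B⁆, t ⊗ Y) = -B̄(1 ⊗ B, st ⊗ ⁅A, Y⁆)`.
So on `[g, g] × g` the value `B̄(s ⊗ X, t ⊗ Y)` depends only on the product `st`, which gives the
first two equalities; the third then follows from the symmetry of `B̄`.
-/

open TensorProduct

section CurrentAlgebra

variable {R L S M : Type*} [CommRing R] [LieRing L] [LieAlgebra R L] [CommRing S] [Algebra R S]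
  [AddCommGroup M] [Module R M] {B : (S ⊗[R] L) →ₗ[R] (S ⊗[R] L) →ₗ[R] M}

theorem apply_tmul_lie_tmul_eq_neg (hinv : ∀ W U V : S ⊗[R] L, B ⁅W, U⁆ V = -B U ⁅W, V⁆)
    (s t : S) (A A' Y : L) :
    B (s ⊗ₜ ⁅A, A'⁆) (t ⊗ₜ Y) = -B (1 ⊗ₜ A') ((s * t) ⊗ₜ ⁅A, Y⁆) := by
  rw [← mul_one s, ← LieAlgebra.ExtendScalars.bracket_tmul, hinv,
    LieAlgebra.ExtendScalars.bracket_tmul, mul_one]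

theorem apply_tmul_tmul_eq_apply_mul_tmul_one
    (hinv : ∀ W U V : S ⊗[R] L, B ⁅W, U⁆ V = -B U ⁅W, V⁆) (s t : S) {X : L}
    (hX : X ∈ LieAlgebra.derivedSeries R L 1) (Y : L) :
    B (s ⊗ₜ X) (t ⊗ₜ Y) = B ((s * t) ⊗ₜ X) (1 ⊗ₜ Y) := by
  let lhs : L →ₗ[R] M := B.flip (t ⊗ₜ Y) ∘ₗ TensorProduct.mk R S L s
  let rhs : L →ₗ[R] M := B.flip (1 ⊗ₜ Y) ∘ₗ TensorProduct.mk R S L (s * t)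
  suffices (LieAlgebra.derivedSeries R L 1 : Submodule R L) ≤ LinearMap.eqLocus lhs rhs from
    this hX
  rw [LieAlgebra.derivedSeries_def, LieAlgebra.derivedSeriesOfIdeal_succ,
    LieAlgebra.derivedSeriesOfIdeal_zero, LieIdeal.toLieSubalgebra_toSubmodule,
    LieSubmodule.lieIdeal_oper_eq_linear_span', Submodule.span_le]
  rintro - ⟨A, -, A', -, rfl⟩
  simp only [SetLike.mem_coe, LinearMap.mem_eqLocus, lhs, rhs, LinearMap.comp_apply,
    TensorProduct.mk_apply, LinearMap.flip_apply]
  rw [apply_tmul_lie_tmul_eq_neg hinv, apply_tmul_lie_tmul_eq_neg hinv, mul_one]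

end CurrentAlgebra

theorem stmt15_general (F : Type*) [Field F]
    (g : Type*) [LieRing g] [LieAlgebra F g]
    (S : Type*) [CommRing S] [Algebra F S]
    (Bb : (S ⊗[F] g) →ₗ[F] (S ⊗[F] g) →ₗ[F] F)
    (hsym : ∀ U V : S ⊗[F] g, Bb U V = Bb V U)
    (hinv : ∀ W U V : S ⊗[F] g, Bb ⁅W, U⁆ V = - Bb U ⁅W, V⁆) :
    ∀ (s t : S) (X : g), X ∈ LieAlgebra.derivedSeries F g 1 → ∀ Y : g,
      Bb (s ⊗ₜ[F] X) (t ⊗ₜ[F] Y) = Bb (t ⊗ₜ[F] X) (s ⊗ₜ[F] Y) ∧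
      Bb (s ⊗ₜ[F] X) (t ⊗ₜ[F] Y) = Bb ((s * t) ⊗ₜ[F] X) ((1 : S) ⊗ₜ[F] Y) ∧
      Bb (s ⊗ₜ[F] X) (t ⊗ₜ[F] Y) = Bb (s ⊗ₜ[F] Y) (t ⊗ₜ[F] X) := by
  intro s t X hX Y
  have hswap : Bb (s ⊗ₜ[F] X) (t ⊗ₜ[F] Y) = Bb (t ⊗ₜ[F] X) (s ⊗ₜ[F] Y) := by
    rw [apply_tmul_tmul_eq_apply_mul_tmul_one hinv s t hX,
      apply_tmul_tmul_eq_apply_mul_tmul_one hinv t s hX, mul_comm]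
  exact ⟨hswap, apply_tmul_tmul_eq_apply_mul_tmul_one hinv s t hX Y, by rw [hswap, hsym]⟩

/-- for an invariant symmetric bilinear form `B̄` on the current Lie
algebra `g ⊗ S`, the forms `L(s,t)(X,Y) = B̄(X ⊗ s, Y ⊗ t)` satisfy
`L(s,t)(X,Y) = L(t,s)(X,Y) = L(st,1)(X,Y) = L(s,t)(Y,X)` for `X ∈ [g,g]`. -/
theorem stmt15 (F : Type*) [Field F] [CharZero F]
    (g : Type*) [LieRing g] [LieAlgebra F g]
    (S : Type*) [CommRing S] [Algebra F S]
    (Bb : (S ⊗[F] g) →ₗ[F] (S ⊗[F] g) →ₗ[F] F)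
    (hsym : ∀ U V : S ⊗[F] g, Bb U V = Bb V U)
    (hinv : ∀ W U V : S ⊗[F] g, Bb ⁅W, U⁆ V = - Bb U ⁅W, V⁆) :
    ∀ (s t : S) (X : g), X ∈ LieAlgebra.derivedSeries F g 1 → ∀ Y : g,
      Bb (s ⊗ₜ[F] X) (t ⊗ₜ[F] Y) = Bb (t ⊗ₜ[F] X) (s ⊗ₜ[F] Y) ∧
      Bb (s ⊗ₜ[F] X) (t ⊗ₜ[F] Y) = Bb ((s * t) ⊗ₜ[F] X) ((1 : S) ⊗ₜ[F] Y) ∧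
      Bb (s ⊗ₜ[F] X) (t ⊗ₜ[F] Y) = Bb (s ⊗ₜ[F] Y) (t ⊗ₜ[F] X) :=
  stmt15_general F g S Bb hsym hinv
end

section
/- Let g be a finite-dimensional non-abelian nilpotent Lie algebra over a field F of characteristic zero admitting an invariant metric, and suppose the quotient Lie algebra g/J(g) is non-abelian, where J(g) = ∩_{k≥1} (Z_k(g) + g^k) is the canonical abelian ideal (Z_k the upper central series, g^k the lower central series). Let S be a finite-dimensional commutative associative F-algebra with unit 1. If the current Lie algebra g ⊗ S (bracket [X ⊗ s, Y ⊗ t] = [X,Y] ⊗ st) admits an invariant metric, then there exists a bilinear map ε : S × S → Cent(g/J(g)), where Cent(g/J(g)) is the centroid of g/J(g) (the space of linear maps T : g/J(g) → g/J(g) with T([x,y]) = [x, T(y)] for all x, y), such that: (i) ε(s,t) = ε(st, 1) for all s, t in S; and (ii) if s in S satisfies ε(s,t) = 0 for all t in S, then s = 0. -/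
/-!
Nondegeneracy of `B` lets one write `B̄(s ⊗ x, t ⊗ y) = B(Φ(s,t) x, y)` (`Φ = currentGramEnd`).
Invariance of `B` and `B̄` makes each `Φ(s,t)` a centroid element, i.e. a Lie module endomorphism
of the adjoint module, and moving brackets across `B̄` shows that `Φ(s,t)` and `Φ(st,1)` agree on
`[g, g]`, so their difference maps `g` into the centre `Z(g) ⊆ J(g)`. Lie module endomorphisms
preserve every `Z_k(g)` and `g^k`, hence `J(g)`, so `ε(s,t)` is the map that `Φ(s,t)` induces on
`g/J(g)` (`currentGramEndModJ`).

If `ε(s,t) = 0` for all `t`, then every `Φ(s,t)` maps `g` into `J(g) ⊆ Z_k(g) + g^k`, where `g^k` is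
the last nonzero term of the lower central series. Pushing brackets through `Φ(s,t)` then gives
`Φ(s,t)(g^k) ⊆ Z_0(g) + g^{2k} = 0`, so for `0 ≠ x ∈ g^k` the vector `s ⊗ x` is `B̄`-orthogonal to
all of `g ⊗ S`, forcing `s = 0`.
-/

open TensorProduct

namespace LieModule

variable {R L M M₂ : Type*} [CommRing R] [LieRing L] [LieAlgebra R L]
  [AddCommGroup M] [Module R M] [LieRingModule L M] [LieModule R L M]
  [AddCommGroup M₂] [Module R M₂] [LieRingModule L M₂] [LieModule R L M₂]

theorem _root_.LieSubmodule.monotone_ucs_s16 (N : LieSubmodule R L M) : Monotone N.ucs :=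
  monotone_nat_of_le_succ fun k => by
    rw [LieSubmodule.ucs_succ]; exact LieSubmodule.le_normalizer _

theorem map_ucs_bot_le (f : M →ₗ⁅R,L⁆ M₂) (k : ℕ) :
    ((⊥ : LieSubmodule R L M).ucs k).map f ≤ (⊥ : LieSubmodule R L M₂).ucs k := by
  induction k with
  | zero => simp
  | succ k ih =>
    rw [LieSubmodule.map_le_iff_le_comap]
    intro m hm
    simp only [LieSubmodule.ucs_succ, LieSubmodule.mem_comap,
      LieSubmodule.mem_normalizer] at hm ⊢
    intro x
    rw [← f.map_lie]
    exact ih (LieSubmodule.mem_map_of_mem (hm x))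

variable (R L M) in
def jSubmodule : LieSubmodule R L M :=
  ⨅ k : ℕ, ((⊥ : LieSubmodule R L M).ucs (k + 1) ⊔ lowerCentralSeries R L M (k + 1))

theorem jSubmodule_le_ucs_sup_lcs (k : ℕ) :
    jSubmodule R L M ≤
      (⊥ : LieSubmodule R L M).ucs (k + 1) ⊔ lowerCentralSeries R L M (k + 1) :=
  iInf_le _ k

theorem maxTrivSubmodule_le_jSubmodule : maxTrivSubmodule R L M ≤ jSubmodule R L M := by
  rw [← LieSubmodule.ucs_bot_one]
  exact le_iInf fun k => le_sup_of_le_left (LieSubmodule.monotone_ucs_s16 _ (by omega))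

theorem map_jSubmodule_le (f : M →ₗ⁅R,L⁆ M) :
    (jSubmodule R L M).map f ≤ jSubmodule R L M := by
  refine le_iInf fun k => (LieSubmodule.map_mono (jSubmodule_le_ucs_sup_lcs k)).trans ?_
  rw [LieSubmodule.map_sup]
  exact sup_le_sup (map_ucs_bot_le f _) (map_lowerCentralSeries_le _ f)

/-- Bracketing with `L` lowers the `ucs` index by one and raises the `lcs` index by one. -/
theorem map_lowerCentralSeries_le_ucs_sup (f : M →ₗ⁅R,L⁆ M) {k : ℕ} (m j : ℕ)
    (hf : (⊤ : LieSubmodule R L M).map f ≤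
      (⊥ : LieSubmodule R L M).ucs (j + m) ⊔ lowerCentralSeries R L M k) :
    (lowerCentralSeries R L M m).map f ≤
      (⊥ : LieSubmodule R L M).ucs j ⊔ lowerCentralSeries R L M (k + m) := by
  induction m generalizing j with
  | zero => simpa using hf
  | succ m ih =>
    have ih' := ih (j + 1) (by rwa [add_right_comm, add_assoc])
    rw [lowerCentralSeries_succ, LieSubmodule.map_bracket_eq, ← add_assoc,
      lowerCentralSeries_succ]
    refine (LieSubmodule.mono_lie_right ⊤ ih').trans ?_
    rw [LieSubmodule.lie_sup]
    refine sup_le_sup ?_ le_rfl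
    rw [LieSubmodule.top_lie_le_iff_le_normalizer, ← LieSubmodule.ucs_succ]

theorem exists_lowerCentralSeries_succ_ne_bot [IsNilpotent L M] (h : ¬ IsTrivial L M) :
    ∃ k, lowerCentralSeries R L M (k + 1) ≠ ⊥ ∧ lowerCentralSeries R L M (k + 2) = ⊥ := by
  obtain ⟨k, hk⟩ : ∃ k, nilpotencyLength L M = k + 2 :=
    Nat.exists_eq_add_of_le' (not_le.mp (mt (isTrivial_of_nilpotencyLength_le_one L M) h))
  exact ⟨k, ((nilpotencyLength_eq_succ_iff R L M (k + 1)).mp hk).symm⟩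

theorem exists_ne_zero_forall_eq_zero_of_map_le_jSubmodule [IsNilpotent L M]
    (h : ¬ IsTrivial L M) {ι : Type*} (f : ι → M →ₗ⁅R,L⁆ M)
    (hf : ∀ i, (⊤ : LieSubmodule R L M).map (f i) ≤ jSubmodule R L M) :
    ∃ x : M, x ≠ 0 ∧ ∀ i, f i x = 0 := by
  obtain ⟨k, hk, hk2⟩ := exists_lowerCentralSeries_succ_ne_bot (R := R) h
  obtain ⟨x, hx, hx0⟩ : ∃ x ∈ lowerCentralSeries R L M (k + 1), x ≠ 0 := by
    simpa [LieSubmodule.eq_bot_iff] using hk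
  refine ⟨x, hx0, fun i => ?_⟩
  have hmap := map_lowerCentralSeries_le_ucs_sup (f i) (k := k + 1) (k + 1) 0
    (by rw [zero_add]; exact (hf i).trans (jSubmodule_le_ucs_sup_lcs k))
  have hbot : lowerCentralSeries R L M (k + 1 + (k + 1)) = ⊥ :=
    eq_bot_iff.mpr (hk2 ▸ antitone_lowerCentralSeries R L M (by omega))
  simpa [hbot] using hmap (LieSubmodule.mem_map_of_mem hx)

end LieModule

theorem TensorProduct.eq_zero_of_tmul_eq_zero {K S V : Type*} [Field K] [AddCommGroup S]
    [Module K S] [AddCommGroup V] [Module K V] {s : S} {x : V} (hx : x ≠ 0)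
    (h : s ⊗ₜ[K] x = 0) : s = 0 := by
  obtain ⟨f, hf⟩ := Module.Projective.exists_dual_eq_one K hx
  simpa [hf] using congrArg (TensorProduct.rid K S ∘ f.lTensor S) h

section BilinearMaps

variable {R S T M : Type*} [CommRing R] [AddCommGroup S] [Module R S] [AddCommGroup T] [Module R T]
  [AddCommGroup M] [Module R M]

noncomputable def LinearMap.mapQ₂ (Φ : S →ₗ[R] T →ₗ[R] Module.End R M) (N : Submodule R M)
    (h : ∀ s t, N ≤ N.comap (Φ s t)) : S →ₗ[R] T →ₗ[R] Module.End R (M ⧸ N) :=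
  LinearMap.mk₂ R (fun s t => N.mapQ N (Φ s t) (h s t))
    (fun _ _ _ => by ext; simp) (fun _ _ _ => by ext; simp)
    (fun _ _ _ => by ext; simp) (fun _ _ _ => by ext; simp)

@[simp]
theorem LinearMap.mapQ₂_apply_mk (Φ : S →ₗ[R] T →ₗ[R] Module.End R M) (N : Submodule R M)
    (h : ∀ s t, N ≤ N.comap (Φ s t)) (s : S) (t : T) (x : M) :
    Φ.mapQ₂ N h s t (Submodule.Quotient.mk x) = Submodule.Quotient.mk (Φ s t x) :=
  rfl

noncomputable def currentGram (Bb : (S ⊗[R] M) →ₗ[R] (S ⊗[R] M) →ₗ[R] R) :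
    S →ₗ[R] S →ₗ[R] M →ₗ[R] M →ₗ[R] R :=
  LinearMap.mk₂ R (fun s t => Bb.compl₁₂ (TensorProduct.mk R S M s) (TensorProduct.mk R S M t))
    (fun _ _ _ => by ext; simp) (fun _ _ _ => by ext; simp)
    (fun _ _ _ => by ext; simp) (fun _ _ _ => by ext; simp)

@[simp]
theorem currentGram_apply (Bb : (S ⊗[R] M) →ₗ[R] (S ⊗[R] M) →ₗ[R] R) (s t : S) (x y : M) :
    currentGram Bb s t x y = Bb (s ⊗ₜ x) (t ⊗ₜ y) :=
  rfl

end BilinearMaps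

section CurrentAlgebra

variable {F g S : Type*} [Field F] [CommRing S] [Algebra F S]
  [LieRing g] [LieAlgebra F g] [FiniteDimensional F g]
  {B : LinearMap.BilinForm F g} (hB : B.Nondegenerate) (Bb : (S ⊗[F] g) →ₗ[F] (S ⊗[F] g) →ₗ[F] F)

noncomputable def currentGramEnd : S →ₗ[F] S →ₗ[F] Module.End F g :=
  (currentGram Bb).compr₂ (LinearMap.llcomp F g _ g (B.toDual hB).symm.toLinearMap)

@[simp]
theorem apply_currentGramEnd (s t : S) (x y : g) :
    B (currentGramEnd hB Bb s t x) y = Bb (s ⊗ₜ x) (t ⊗ₜ y) := by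
  simp [currentGramEnd]

theorem currentGramEnd_lie (hinv : ∀ x y z : g, B ⁅x, y⁆ z = - B y ⁅x, z⁆)
    (hbinv : ∀ W U V : S ⊗[F] g, Bb ⁅W, U⁆ V = - Bb U ⁅W, V⁆) (s t : S) (a x : g) :
    currentGramEnd hB Bb s t ⁅a, x⁆ = ⁅a, currentGramEnd hB Bb s t x⁆ :=
  (B.toDual hB).injective <| LinearMap.ext fun y => by
    have h : (s ⊗ₜ[F] ⁅a, x⁆ : S ⊗[F] g) = ⁅(1 : S) ⊗ₜ[F] a, s ⊗ₜ[F] x⁆ := by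
      rw [LieAlgebra.ExtendScalars.bracket_tmul, one_mul]
    rw [LinearMap.BilinForm.toDual_def, LinearMap.BilinForm.toDual_def, apply_currentGramEnd, h,
      hbinv, LieAlgebra.ExtendScalars.bracket_tmul, one_mul, ← apply_currentGramEnd hB, hinv]

theorem currentGramEnd_lie_eq_mul_one (hbinv : ∀ W U V : S ⊗[F] g, Bb ⁅W, U⁆ V = - Bb U ⁅W, V⁆)
    (s t : S) (a x : g) :
    currentGramEnd hB Bb s t ⁅a, x⁆ = currentGramEnd hB Bb (s * t) 1 ⁅a, x⁆ :=
  (B.toDual hB).injective <| LinearMap.ext fun y => by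
    have h (u : S) : (u ⊗ₜ[F] ⁅a, x⁆ : S ⊗[F] g) = ⁅u ⊗ₜ[F] a, (1 : S) ⊗ₜ[F] x⁆ := by
      rw [LieAlgebra.ExtendScalars.bracket_tmul, mul_one]
    rw [LinearMap.BilinForm.toDual_def, LinearMap.BilinForm.toDual_def, apply_currentGramEnd,
      apply_currentGramEnd, h, h, hbinv, hbinv, LieAlgebra.ExtendScalars.bracket_tmul,
      LieAlgebra.ExtendScalars.bracket_tmul, mul_one]

theorem tmul_eq_zero_of_forall_currentGramEnd_eq_zero
    (hbnondeg : ∀ U : S ⊗[F] g, (∀ V : S ⊗[F] g, Bb U V = 0) → U = 0) {s : S} {x : g}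
    (h : ∀ t, currentGramEnd hB Bb s t x = 0) : s ⊗ₜ[F] x = 0 := by
  refine hbnondeg _ fun V => ?_
  induction V using TensorProduct.induction_on with
  | zero => simp
  | tmul t y => rw [← apply_currentGramEnd hB, h t, map_zero, LinearMap.zero_apply]
  | add U V hU hV => rw [map_add, hU, hV, add_zero]

theorem currentGramEnd_sub_mem_maxTrivSubmodule (hinv : ∀ x y z : g, B ⁅x, y⁆ z = - B y ⁅x, z⁆)
    (hbinv : ∀ W U V : S ⊗[F] g, Bb ⁅W, U⁆ V = - Bb U ⁅W, V⁆) (s t : S) (x : g) :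
    currentGramEnd hB Bb s t x - currentGramEnd hB Bb (s * t) 1 x ∈
      LieModule.maxTrivSubmodule F g g := by
  intro a
  rw [lie_sub, ← currentGramEnd_lie hB Bb hinv hbinv, ← currentGramEnd_lie hB Bb hinv hbinv,
    currentGramEnd_lie_eq_mul_one hB Bb hbinv, sub_self]

variable (hinv : ∀ x y z : g, B ⁅x, y⁆ z = - B y ⁅x, z⁆)
  (hbinv : ∀ W U V : S ⊗[F] g, Bb ⁅W, U⁆ V = - Bb U ⁅W, V⁆)

noncomputable def currentGramLieHom (s t : S) : g →ₗ⁅F,g⁆ g :=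
  { currentGramEnd hB Bb s t with map_lie' := currentGramEnd_lie hB Bb hinv hbinv s t _ _ }

noncomputable def currentGramEndModJ :
    S →ₗ[F] S →ₗ[F] ((g ⧸ LieModule.jSubmodule F g g) →ₗ[F] (g ⧸ LieModule.jSubmodule F g g)) :=
  (currentGramEnd hB Bb).mapQ₂ _ fun s t _ hx =>
    LieModule.map_jSubmodule_le (currentGramLieHom hB Bb hinv hbinv s t)
      (LieSubmodule.mem_map_of_mem hx)

theorem currentGramEndModJ_lie (s t : S) (u v : g ⧸ LieModule.jSubmodule F g g) :
    currentGramEndModJ hB Bb hinv hbinv s t ⁅u, v⁆ =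
      ⁅u, currentGramEndModJ hB Bb hinv hbinv s t v⁆ := by
  obtain ⟨x, rfl⟩ := Submodule.Quotient.mk_surjective _ u
  obtain ⟨y, rfl⟩ := Submodule.Quotient.mk_surjective _ v
  exact congrArg Submodule.Quotient.mk (currentGramEnd_lie hB Bb hinv hbinv s t x y)

theorem currentGramEndModJ_eq_mul_one (s t : S) :
    currentGramEndModJ hB Bb hinv hbinv s t = currentGramEndModJ hB Bb hinv hbinv (s * t) 1 :=
  Submodule.linearMap_qext _ <| LinearMap.ext fun x =>
    (Submodule.Quotient.eq _).mpr <| LieModule.maxTrivSubmodule_le_jSubmodule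
      (currentGramEnd_sub_mem_maxTrivSubmodule hB Bb hinv hbinv s t x)

theorem eq_zero_of_forall_currentGramEndModJ_eq_zero [LieModule.IsNilpotent g g]
    (hnt : ¬ LieModule.IsTrivial g g)
    (hbnondeg : ∀ U : S ⊗[F] g, (∀ V : S ⊗[F] g, Bb U V = 0) → U = 0) {s : S}
    (hs : ∀ t, currentGramEndModJ hB Bb hinv hbinv s t = 0) : s = 0 := by
  have hJ (t : S) : (⊤ : LieSubmodule F g g).map (currentGramLieHom hB Bb hinv hbinv s t) ≤
      LieModule.jSubmodule F g g := by
    rw [LieSubmodule.map_le_iff_le_comap]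
    intro x _
    have := LinearMap.congr_fun (hs t) (Submodule.Quotient.mk x)
    rwa [currentGramEndModJ, LinearMap.mapQ₂_apply_mk, LinearMap.zero_apply,
      Submodule.Quotient.mk_eq_zero] at this
  obtain ⟨x, hx0, hx⟩ :=
    LieModule.exists_ne_zero_forall_eq_zero_of_map_le_jSubmodule hnt _ hJ
  exact TensorProduct.eq_zero_of_tmul_eq_zero hx0
    (tmul_eq_zero_of_forall_currentGramEnd_eq_zero hB Bb hbnondeg hx)

end CurrentAlgebra

theorem stmt16_general (F : Type*) [Field F]
    (g : Type*) [LieRing g] [LieAlgebra F g] [FiniteDimensional F g]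
    [LieModule.IsNilpotent g g]
    -- `g` is non-abelian
    (hna : ∃ x y : g, ⁅x, y⁆ ≠ 0)
    -- `g` admits an invariant metric
    (B : g →ₗ[F] g →ₗ[F] F)
    (hnondeg : ∀ x : g, (∀ y : g, B x y = 0) → x = 0)
    (hinv : ∀ x y z : g, B ⁅x, y⁆ z = - B y ⁅x, z⁆)
    -- the canonical abelian ideal `J(g)`
    (JI : LieIdeal F g)
    (hJI : JI = ⨅ k : ℕ, ((⊥ : LieIdeal F g).ucs (k + 1) ⊔
      LieModule.lowerCentralSeries F g g (k + 1)))
    (S : Type*) [CommRing S] [Algebra F S]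
    -- the current Lie algebra `g ⊗ S` admits an invariant metric `B̄`
    (Bb : (S ⊗[F] g) →ₗ[F] (S ⊗[F] g) →ₗ[F] F)
    (hbnondeg : ∀ U : S ⊗[F] g, (∀ V : S ⊗[F] g, Bb U V = 0) → U = 0)
    (hbinv : ∀ W U V : S ⊗[F] g, Bb ⁅W, U⁆ V = - Bb U ⁅W, V⁆) :
    ∃ ε : S →ₗ[F] S →ₗ[F] ((g ⧸ JI) →ₗ[F] (g ⧸ JI)),
      -- each `ε(s,t)` lies in the centroid of `g/J(g)`
      (∀ (s t : S) (x y : g ⧸ JI), ε s t ⁅x, y⁆ = ⁅x, ε s t y⁆) ∧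
      -- (i) `ε(s,t) = ε(st,1)`
      (∀ s t : S, ε s t = ε (s * t) 1) ∧
      -- (ii) non-degeneracy
      (∀ s : S, (∀ t : S, ε s t = 0) → s = 0) := by
  replace hJI : JI = LieModule.jSubmodule F g g := hJI
  subst hJI
  have hB : B.Nondegenerate := LinearMap.BilinForm.Nondegenerate.ofSeparatingLeft hnondeg
  have hnt : ¬ LieModule.IsTrivial g g := fun _ =>
    hna.elim fun x ⟨y, hxy⟩ => hxy (LieModule.IsTrivial.trivial x y)
  exact ⟨currentGramEndModJ hB Bb hinv hbinv, currentGramEndModJ_lie hB Bb hinv hbinv,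
    currentGramEndModJ_eq_mul_one hB Bb hinv hbinv,
    fun _ => eq_zero_of_forall_currentGramEndModJ_eq_zero hB Bb hinv hbinv hnt hbnondeg⟩

/-- if `g` is a finite-dimensional non-abelian nilpotent quadratic Lie
algebra with `g/J(g)` non-abelian, `S` a finite-dimensional commutative associative
unital algebra, and the current Lie algebra `g ⊗ S` admits an invariant metric, then
there is a bilinear map `ε : S × S → Cent(g/J(g))` with `ε(s,t) = ε(st,1)` which is
non-degenerate in `s`. -/
theorem stmt16 (F : Type*) [Field F] [CharZero F]
    (g : Type*) [LieRing g] [LieAlgebra F g] [FiniteDimensional F g]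
    [LieModule.IsNilpotent g g]
    -- `g` is non-abelian
    (hna : ∃ x y : g, ⁅x, y⁆ ≠ 0)
    -- `g` admits an invariant metric
    (B : g →ₗ[F] g →ₗ[F] F)
    (hsym : ∀ x y : g, B x y = B y x)
    (hnondeg : ∀ x : g, (∀ y : g, B x y = 0) → x = 0)
    (hinv : ∀ x y z : g, B ⁅x, y⁆ z = - B y ⁅x, z⁆)
    -- the canonical abelian ideal `J(g)`
    (JI : LieIdeal F g)
    (hJI : JI = ⨅ k : ℕ, ((⊥ : LieIdeal F g).ucs (k + 1) ⊔
      LieModule.lowerCentralSeries F g g (k + 1)))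
    -- `g / J(g)` is non-abelian
    (hqna : ∃ x y : g ⧸ JI, ⁅x, y⁆ ≠ 0)
    (S : Type*) [CommRing S] [Algebra F S] [FiniteDimensional F S]
    -- the current Lie algebra `g ⊗ S` admits an invariant metric `B̄`
    (Bb : (S ⊗[F] g) →ₗ[F] (S ⊗[F] g) →ₗ[F] F)
    (hbsym : ∀ U V : S ⊗[F] g, Bb U V = Bb V U)
    (hbnondeg : ∀ U : S ⊗[F] g, (∀ V : S ⊗[F] g, Bb U V = 0) → U = 0)
    (hbinv : ∀ W U V : S ⊗[F] g, Bb ⁅W, U⁆ V = - Bb U ⁅W, V⁆) :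
    ∃ ε : S →ₗ[F] S →ₗ[F] ((g ⧸ JI) →ₗ[F] (g ⧸ JI)),
      -- each `ε(s,t)` lies in the centroid of `g/J(g)`
      (∀ (s t : S) (x y : g ⧸ JI), ε s t ⁅x, y⁆ = ⁅x, ε s t y⁆) ∧
      -- (i) `ε(s,t) = ε(st,1)`
      (∀ s t : S, ε s t = ε (s * t) 1) ∧
      -- (ii) non-degeneracy
      (∀ s : S, (∀ t : S, ε s t = 0) → s = 0) :=
  stmt16_general F g hna B hnondeg hinv JI hJI S Bb hbnondeg hbinv
end

section
/- Let g be a finite-dimensional nilpotent Lie algebra over a field F of characteristic zero with dim g > 1, and let f be a non-zero symmetric invariant bilinear form on g (f([x,y],z) = −f(y,[x,z])). Let A_f be the F-algebra with underlying vector space F × g and (non-associative) product (ξ, x)(η, y) = (ξη + f(x,y), ξy + ηx + (1/2)[x,y]). Then f is non-degenerate if and only if A_f is a simple algebra, i.e. the only subspaces I ⊆ A_f satisfying I·A_f ⊆ I and A_f·I ⊆ I are {0} and A_f (and the product of A_f is non-zero). -/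
/-!
If `f` is non-degenerate, symmetrising the product kills the bracket, so an ideal is closed
under the Jordan product `(ξ,x)∘(η,y) = (ξη + f(x,y), ξy + ηx)` of the spin factor. Starting
from a non-zero element, Jordan products with elements `(0,y)` produce an element with non-zero
scalar part, then (using a vector of `ker f(z,·)`, which exists since `dim g > 1`) a non-zero
element `(0,w)`, and finally the unit `(1,0)`. Conversely, invariance makes the radical of `f`
a Lie ideal, and `0 × rad f` is then a proper ideal of `A_f`.
-/

lemma LinearMap.SeparatingLeft.exists_apply_ne_zero {R M N : Type*} [CommSemiring R]
    [AddCommMonoid M] [Module R M] [AddCommMonoid N] [Module R N] {B : M →ₗ[R] N →ₗ[R] R}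
    (hB : B.SeparatingLeft) {x : M} (hx : x ≠ 0) : ∃ y, B x y ≠ 0 := by
  by_contra! h
  exact hx (hB x h)

namespace FormAlgebra

section Ideal

variable {R M : Type*} [Semiring R] [AddCommMonoid M] [Module R M]

def IsMulIdeal (mul : M → M → M) (I : Submodule R M) : Prop :=
  ∀ p ∈ I, ∀ q : M, mul p q ∈ I ∧ mul q p ∈ I

end Ideal

variable {F g : Type*} [Field F] [LieRing g] [LieAlgebra F g] (f : g →ₗ[F] g →ₗ[F] F)

def mul (p q : F × g) : F × g :=
  (p.1 * q.1 + f p.2 q.2, p.1 • q.2 + q.1 • p.2 + (2⁻¹ : F) • ⁅p.2, q.2⁆)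

def jordanMul (p q : F × g) : F × g :=
  (p.1 * q.1 + f p.2 q.2, p.1 • q.2 + q.1 • p.2)

lemma one_zero_mul (q : F × g) : mul f (1, 0) q = q := by
  ext <;> simp [mul]

variable {f}

lemma mul_add_mul_swap (hsym : ∀ x y : g, f x y = f y x) (p q : F × g) :
    mul f p q + mul f q p = (2 : F) • jordanMul f p q := by
  ext
  · simp only [mul, jordanMul, Prod.fst_add, Prod.smul_fst, smul_eq_mul, hsym q.2 p.2]
    ring
  · simp only [mul, jordanMul, Prod.snd_add, Prod.smul_snd, ← lie_skew p.2 q.2]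
    module

lemma IsMulIdeal.jordanMul_mem [NeZero (2 : F)] (hsym : ∀ x y : g, f x y = f y x)
    {I : Submodule F (F × g)} (hI : IsMulIdeal (mul f) I) {p : F × g} (hp : p ∈ I)
    (q : F × g) : jordanMul f p q ∈ I := by
  have h := I.add_mem (hI p hp q).1 (hI p hp q).2
  rwa [mul_add_mul_swap hsym, I.smul_mem_iff two_ne_zero] at h

lemma IsMulIdeal.eq_top_of_mem {I : Submodule F (F × g)} (hI : IsMulIdeal (mul f) I)
    {c : F} (hc : c ≠ 0) (h : ((c, 0) : F × g) ∈ I) : I = ⊤ := by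
  have h1 : ((1, 0) : F × g) ∈ I := by simpa [hc] using I.smul_mem c⁻¹ h
  exact Submodule.eq_top_iff'.2 fun r ↦ by simpa [one_zero_mul] using (hI _ h1 r).1

lemma IsMulIdeal.exists_fst_ne_zero_mem [NeZero (2 : F)] (hsym : ∀ x y : g, f x y = f y x)
    (hnd : f.SeparatingLeft) {I : Submodule F (F × g)} (hI : IsMulIdeal (mul f) I)
    (hI0 : I ≠ ⊥) : ∃ c z, c ≠ 0 ∧ ((c, z) : F × g) ∈ I := by
  obtain ⟨⟨ξ, x⟩, hp, hp0⟩ := Submodule.exists_mem_ne_zero_of_ne_bot hI0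
  by_cases hx : x = 0
  · subst hx
    exact ⟨ξ, 0, fun h ↦ hp0 (by simp [h]), hp⟩
  · obtain ⟨y, hy⟩ := hnd.exists_apply_ne_zero hx
    exact ⟨f x y, ξ • y, hy, by simpa [jordanMul] using hI.jordanMul_mem hsym hp (0, y)⟩

lemma IsMulIdeal.exists_zero_mk_mem [NeZero (2 : F)] [FiniteDimensional F g]
    (hdim : 1 < Module.finrank F g) (hsym : ∀ x y : g, f x y = f y x)
    {I : Submodule F (F × g)} (hI : IsMulIdeal (mul f) I) {c : F} {z : g} (hc : c ≠ 0)
    (h : ((c, z) : F × g) ∈ I) : ∃ w ≠ 0, ((0, w) : F × g) ∈ I := by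
  obtain ⟨w, hw, hw0⟩ := Submodule.exists_mem_ne_zero_of_ne_bot <|
    (f z).ker_ne_bot_of_finrank_lt (by rwa [Module.finrank_self])
  refine ⟨w, hw0, (I.smul_mem_iff hc).1 ?_⟩
  simpa [jordanMul, LinearMap.mem_ker.1 hw] using hI.jordanMul_mem hsym h (0, w)

lemma IsMulIdeal.eq_top_of_zero_mk_mem [NeZero (2 : F)] (hsym : ∀ x y : g, f x y = f y x)
    (hnd : f.SeparatingLeft) {I : Submodule F (F × g)} (hI : IsMulIdeal (mul f) I) {w : g}
    (hw0 : w ≠ 0) (h : ((0, w) : F × g) ∈ I) : I = ⊤ := by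
  obtain ⟨u, hu⟩ := hnd.exists_apply_ne_zero hw0
  exact hI.eq_top_of_mem hu (by simpa [jordanMul] using hI.jordanMul_mem hsym h (0, u))

lemma IsMulIdeal.eq_bot_or_eq_top [NeZero (2 : F)] [FiniteDimensional F g]
    (hdim : 1 < Module.finrank F g) (hsym : ∀ x y : g, f x y = f y x)
    (hnd : f.SeparatingLeft) {I : Submodule F (F × g)} (hI : IsMulIdeal (mul f) I) :
    I = ⊥ ∨ I = ⊤ := by
  refine or_iff_not_imp_left.2 fun hI0 ↦ ?_
  obtain ⟨c, z, hc, hcz⟩ := hI.exists_fst_ne_zero_mem hsym hnd hI0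
  obtain ⟨w, hw0, hw⟩ := hI.exists_zero_mk_mem hdim hsym hc hcz
  exact hI.eq_top_of_zero_mk_mem hsym hnd hw0 hw

lemma lie_mem_ker (hinv : ∀ x y z : g, f ⁅x, y⁆ z = - f y ⁅x, z⁆) {a : g}
    (ha : a ∈ LinearMap.ker f) (b : g) : ⁅b, a⁆ ∈ LinearMap.ker f := by
  rw [LinearMap.mem_ker] at ha ⊢
  ext z
  simp [hinv, ha]

lemma isMulIdeal_prod_ker (hsym : ∀ x y : g, f x y = f y x)
    (hinv : ∀ x y z : g, f ⁅x, y⁆ z = - f y ⁅x, z⁆) :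
    IsMulIdeal (mul f) ((⊥ : Submodule F F).prod (LinearMap.ker f)) := by
  rintro ⟨ξ, a⟩ hp ⟨η, b⟩
  obtain ⟨hξ, ha⟩ := Submodule.mem_prod.1 hp
  obtain rfl : ξ = 0 := (Submodule.mem_bot F).1 hξ
  have hba : f ⁅b, a⁆ = 0 := lie_mem_ker hinv ha b
  have hab : f ⁅a, b⁆ = 0 := by
    rw [← lie_skew, map_neg, hba, neg_zero]
  have hfa : f a = 0 := LinearMap.mem_ker.1 ha
  simp [mul, Submodule.mem_prod, hfa, hsym b a, hab, hba]

end FormAlgebra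

open FormAlgebra in
theorem stmt18_general (F : Type*) [Field F] [CharZero F]
    (g : Type*) [LieRing g] [LieAlgebra F g] [FiniteDimensional F g]
    (hdim : 1 < Module.finrank F g)
    (f : g →ₗ[F] g →ₗ[F] F)
    (hsym : ∀ x y : g, f x y = f y x)
    (hinv : ∀ x y z : g, f ⁅x, y⁆ z = - f y ⁅x, z⁆) :
    let mul : F × g → F × g → F × g :=
      fun p q => (p.1 * q.1 + f p.2 q.2,
        p.1 • q.2 + q.1 • p.2 + (2⁻¹ : F) • ⁅p.2, q.2⁆)
    -- `f` is non-degenerate iff `A_f` is simple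
    ((∀ x : g, (∀ y : g, f x y = 0) → x = 0) ↔
      ((∃ p q : F × g, mul p q ≠ 0) ∧
       ∀ I : Submodule F (F × g),
         (∀ p ∈ I, ∀ q : F × g, mul p q ∈ I ∧ mul q p ∈ I) →
         I = ⊥ ∨ I = ⊤)) := by
  intro mul
  refine ⟨fun hnd ↦ ⟨⟨(1, 0), (1, 0), ?_⟩, fun I hI ↦ IsMulIdeal.eq_bot_or_eq_top hdim hsym hnd hI⟩,
    fun ⟨_, hsimple⟩ ↦ ?_⟩
  · simp [mul]
  rw [← LinearMap.SeparatingLeft, LinearMap.separatingLeft_iff_ker_eq_bot]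
  rcases hsimple _ (isMulIdeal_prod_ker hsym hinv) with h | h
  · exact ((Submodule.prod_eq_bot_iff F F g).1 h).2
  · exact absurd ((Submodule.prod_eq_top_iff F F g).1 h).1 bot_ne_top

/-- for a finite-dimensional nilpotent Lie algebra `g` with
`dim g > 1` and a non-zero symmetric invariant bilinear form `f`, the algebra
`A_f = F × g` with product `(ξ,x)(η,y) = (ξη + f(x,y), ξy + ηx + ½[x,y])` is simple
iff `f` is non-degenerate. -/
theorem stmt18 (F : Type*) [Field F] [CharZero F]
    (g : Type*) [LieRing g] [LieAlgebra F g] [FiniteDimensional F g]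
    [LieRing.IsNilpotent g]
    (hdim : 1 < Module.finrank F g)
    (f : g →ₗ[F] g →ₗ[F] F) (hf0 : f ≠ 0)
    (hsym : ∀ x y : g, f x y = f y x)
    (hinv : ∀ x y z : g, f ⁅x, y⁆ z = - f y ⁅x, z⁆) :
    let mul : F × g → F × g → F × g :=
      fun p q => (p.1 * q.1 + f p.2 q.2,
        p.1 • q.2 + q.1 • p.2 + (2⁻¹ : F) • ⁅p.2, q.2⁆)
    -- `f` is non-degenerate iff `A_f` is simple
    ((∀ x : g, (∀ y : g, f x y = 0) → x = 0) ↔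
      ((∃ p q : F × g, mul p q ≠ 0) ∧
       ∀ I : Submodule F (F × g),
         (∀ p ∈ I, ∀ q : F × g, mul p q ∈ I ∧ mul q p ∈ I) →
         I = ⊥ ∨ I = ⊤)) :=
  stmt18_general F g hdim f hsym hinv
end
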